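/- arXiv:2405.18273 — 7 statements merged into one kernel-verified Lean document; each statement's English description precedes it below -/
import Mathlib

section
/- Let d ≥ 3, let the graph W be connected, and assume φ'(t) > 0 and φ''(t) ≥ 0 for all t ∈ [−1,1]. If X ∈ ℝ^{d×n} with unit-norm columns is critical for f and has negative-semidefinite Hessian, then all columns of X are equal: x_1 = x_2 = ⋯ = x_n (in particular X is a global maximum of f over matrices with unit-norm columns). -/
open Matrix

noncomputable section

/-- Frobenius inner product `⟨A,B⟩ = ∑ᵢⱼ Aᵢⱼ Bᵢⱼ`. -/
def frob {ι κ : Type*} [Fintype ι] [Fintype κ] (A B : Matrix ι κ ℝ) : ℝ :=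
  ∑ i, ∑ j, A i j * B i j

/-- `ddiag` zeroes out all off-diagonal entries of a square matrix. -/
def ddiag {ι : Type*} [Fintype ι] [DecidableEq ι] (M : Matrix ι ι ℝ) : Matrix ι ι ℝ :=
  Matrix.diagonal fun i => M i i

/-- Graph Laplacian `L(M) = diag(M 1) − M`. -/
def lap {ι : Type*} [Fintype ι] [DecidableEq ι] (M : Matrix ι ι ℝ) : Matrix ι ι ℝ :=
  Matrix.diagonal (fun i => ∑ j, M i j) - M

/-- `X` has unit-norm columns. -/
def unitCols {d : ℕ} {ι : Type*} [Fintype ι] (X : Matrix (Fin d) ι ℝ) : Prop :=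
  ∀ j, ∑ i, X i j ^ 2 = 1

/-- `A = W ⊙ φ'(XᵀX)` (`d1` playing the role of `φ'`). -/
def Amat {d : ℕ} {ι : Type*} [Fintype ι] (W : Matrix ι ι ℝ) (X : Matrix (Fin d) ι ℝ)
    (d1 : ℝ → ℝ) : Matrix ι ι ℝ :=
  Matrix.hadamard W ((Xᵀ * X).map d1)

/-- `S = ddiag(XᵀXA) − A`. -/
def Smat {d : ℕ} {ι : Type*} [Fintype ι] [DecidableEq ι] (W : Matrix ι ι ℝ)
    (X : Matrix (Fin d) ι ℝ) (d1 : ℝ → ℝ) : Matrix ι ι ℝ :=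
  ddiag ((Xᵀ * X) * Amat W X d1) - Amat W X d1

/-- First-order criticality: `X S = 0`, i.e. `X·ddiag(XᵀXA) = XA`
(vanishing Riemannian gradient on the product of spheres). -/
def IsCritical {d : ℕ} {ι : Type*} [Fintype ι] [DecidableEq ι] (W : Matrix ι ι ℝ)
    (X : Matrix (Fin d) ι ℝ) (d1 : ℝ → ℝ) : Prop :=
  X * Smat W X d1 = 0

/-- The Riemannian Hessian quadratic form of `f` at `X` is negative semidefinite:
`−⟨ẊᵀẊ, S⟩ + (1/2)⟨(XᵀẊ + ẊᵀX)^{⊙2}, W ⊙ φ''(XᵀX)⟩ ≤ 0` for all tangent `Ẋ`. -/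
def HessNegSemidef {d : ℕ} {ι : Type*} [Fintype ι] [DecidableEq ι] (W : Matrix ι ι ℝ)
    (X : Matrix (Fin d) ι ℝ) (d1 d2 : ℝ → ℝ) : Prop :=
  ∀ V : Matrix (Fin d) ι ℝ, (∀ j, (Xᵀ * V) j j = 0) →
    -(frob (Vᵀ * V) (Smat W X d1))
      + (1 / 2) * frob ((Xᵀ * V + Vᵀ * X).map fun t => t ^ 2)
          (Matrix.hadamard W ((Xᵀ * X).map d2)) ≤ 0

/-- The graph with an edge `{i,j}` whenever `w_ij > 0` is connected. -/
def ConnectedW {ι : Type*} (W : Matrix ι ι ℝ) : Prop :=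
  (SimpleGraph.fromRel fun i j => 0 < W i j).Connected

/-- `f(Y) = (1/2)⟨W, φ(YᵀY)⟩`. -/
def fval {d : ℕ} {ι : Type*} [Fintype ι] (W : Matrix ι ι ℝ) (φ : ℝ → ℝ)
    (Y : Matrix (Fin d) ι ℝ) : ℝ :=
  (1 / 2) * frob W ((Yᵀ * Y).map φ)

/-- `h(t) = tφ'(t) − (1−t²)φ''(t)`. -/
def hfun (d1 d2 : ℝ → ℝ) (t : ℝ) : ℝ := t * d1 t - (1 - t ^ 2) * d2 t

/-- The matrix `M` with `m_ij = w_ij · h(x_iᵀx_j)`. -/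
def Mmat {d : ℕ} {ι : Type*} [Fintype ι] (W : Matrix ι ι ℝ) (X : Matrix (Fin d) ι ℝ)
    (d1 d2 : ℝ → ℝ) : Matrix ι ι ℝ :=
  Matrix.of fun i j => W i j * hfun d1 d2 ((Xᵀ * X) i j)

/-- The kernel of `L` is exactly `span(1)`. -/
def KernelIsConst {ι : Type*} [Fintype ι] [DecidableEq ι] (L : Matrix ι ι ℝ) : Prop :=
  ∀ α : ι → ℝ, L.mulVec α = 0 ↔ ∃ c : ℝ, ∀ k, α k = c

/-- The regular `n`-gon configuration on the unit circle. -/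
def ngon (n : ℕ) : Matrix (Fin 2) (Fin n) ℝ :=
  Matrix.of fun a j =>
    if a = 0 then Real.cos (2 * Real.pi * (j : ℝ) / (n : ℝ))
    else Real.sin (2 * Real.pi * (j : ℝ) / (n : ℝ))

/-- The log-sum-exp smoothing `φ_{ε,τ}(t) = ε·log(1 + e^{(t−τ)/ε})` of the ReLU. -/
def philse (ε τ : ℝ) : ℝ → ℝ := fun t => ε * Real.log (1 + Real.exp ((t - τ) / ε))


/-- Along a walk in a graph, a function constant on edges is constant. -/
lemma reach_const {α : Type*} {G : SimpleGraph α} (g : α → ℝ)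
    (h : ∀ i j, G.Adj i j → g i = g j) {u v : α} (hr : G.Reachable u v) : g u = g v := by
  obtain ⟨p⟩ := hr
  induction p with
  | nil => rfl
  | cons ha _ ih => exact (h _ _ ha).trans ih

lemma double_sum_comb {α β : Type*} [Fintype α] [Fintype β] (f g : α → β → ℝ) (c : ℝ) :
    ∑ i, ∑ j, (-(f i j) + c * g i j) = -(∑ i, ∑ j, f i j) + c * ∑ i, ∑ j, g i j := by
  simp [Finset.sum_add_distrib, Finset.mul_sum, Finset.sum_neg_distrib]

/-- Theorem 1, spheres `d ≥ 3`: for a connected graph and increasing convex `φ`,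
critical points with negative-semidefinite Hessian are synchronized and globally maximal. -/
theorem synchronization_on_spheres
    {d n : ℕ} (hd : 3 ≤ d) (hn : 1 ≤ n)
    (W : Matrix (Fin n) (Fin n) ℝ) (hWsymm : W.IsSymm) (hWnonneg : ∀ i j, 0 ≤ W i j)
    (hconn : ConnectedW W)
    (φ d1 d2 : ℝ → ℝ)
    (hder1 : ∀ t ∈ Set.Icc (-1 : ℝ) 1, HasDerivAt φ (d1 t) t)
    (hder2 : ∀ t ∈ Set.Icc (-1 : ℝ) 1, HasDerivAt d1 (d2 t) t)
    (hd2cont : ContinuousOn d2 (Set.Icc (-1 : ℝ) 1))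
    (hd1pos : ∀ t ∈ Set.Icc (-1 : ℝ) 1, 0 < d1 t)
    (hd2nonneg : ∀ t ∈ Set.Icc (-1 : ℝ) 1, 0 ≤ d2 t)
    (X : Matrix (Fin d) (Fin n) ℝ) (hX : unitCols X)
    (hcrit : IsCritical W X d1) (hhess : HessNegSemidef W X d1 d2) :
    (∀ j j' : Fin n, ∀ i, X i j = X i j') ∧
    (∀ Y : Matrix (Fin d) (Fin n) ℝ, unitCols Y → fval W φ Y ≤ fval W φ X) := by
  classical
  have hd3 : (3 : ℝ) ≤ (d : ℝ) := by exact_mod_cast hd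
  set T : Fin n → Fin n → ℝ := fun i j => ∑ a, X a i * X a j with hTdef
  have hXX : ∀ i j, (Xᵀ * X) i j = T i j := by
    intro i j; simp [Matrix.mul_apply, hTdef]
  have hXsq : ∀ j, ∑ a, X a j * X a j = 1 := by
    intro j; have := hX j; simpa [sq] using this
  have hTii : ∀ i, T i i = 1 := fun i => hXsq i
  have hTsymm : ∀ i j, T i j = T j i :=
    fun i j => Finset.sum_congr rfl fun a _ => mul_comm _ _
  have hWs : ∀ i j, W i j = W j i := fun i j => (hWsymm.apply i j).symm
  have hTmem : ∀ (Z : Matrix (Fin d) (Fin n) ℝ), unitCols Z → ∀ i j,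
      (∑ a, Z a i * Z a j) ∈ Set.Icc (-1 : ℝ) 1 := by
    intro Z hZ i j
    have h2 := Finset.sum_mul_sq_le_sq_mul_sq Finset.univ (fun a => Z a i) (fun a => Z a j)
    rw [hZ i, hZ j] at h2
    constructor
    · nlinarith [h2]
    · nlinarith [h2]
  have hT1 : ∀ i j, T i j ≤ 1 := fun i j => (hTmem X hX i j).2
  have hTm1 : ∀ i j, -1 ≤ T i j := fun i j => (hTmem X hX i j).1
  -- the family of test directions
  set V : Fin d → Matrix (Fin d) (Fin n) ℝ :=
    fun a => Matrix.of fun b k => (if b = a then (1 : ℝ) else 0) - X a k * X b k with hVdef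
  have hXV : ∀ a i j, (Xᵀ * V a) i j = X a i - X a j * T i j := by
    intro a i j
    simp only [Matrix.mul_apply, Matrix.transpose_apply, hVdef, Matrix.of_apply]
    have h1 : ∀ b, X b i * ((if b = a then (1 : ℝ) else 0) - X a j * X b j)
        = (if b = a then X b i else 0) - X a j * (X b i * X b j) := by
      intro b; split <;> ring
    rw [Finset.sum_congr rfl fun b _ => h1 b, Finset.sum_sub_distrib]
    simp only [Finset.sum_ite_eq', Finset.mem_univ, if_true]
    rw [← Finset.mul_sum]
  have hVX : ∀ a i j, ((V a)ᵀ * X) i j = X a j - X a i * T i j := by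
    intro a i j
    simp only [Matrix.mul_apply, Matrix.transpose_apply, hVdef, Matrix.of_apply]
    have h1 : ∀ b, ((if b = a then (1 : ℝ) else 0) - X a i * X b i) * X b j
        = (if b = a then X b j else 0) - X a i * (X b i * X b j) := by
      intro b; split <;> ring
    rw [Finset.sum_congr rfl fun b _ => h1 b, Finset.sum_sub_distrib]
    simp only [Finset.sum_ite_eq', Finset.mem_univ, if_true]
    rw [← Finset.mul_sum]
  have htang : ∀ a j, (Xᵀ * V a) j j = 0 := by
    intro a j; rw [hXV, hTii]; ring
  have hVVterm : ∀ a i j b, V a b i * V a b j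
      = (if b = a then 1 - X a i * X a i - X a j * X a j else 0)
        + (X a i * X b i) * (X a j * X b j) := by
    intro a i j b
    simp only [hVdef, Matrix.of_apply]
    by_cases h : b = a
    · subst h; rw [if_pos rfl, if_pos rfl]; ring
    · rw [if_neg h, if_neg h]; ring
  have hSumVV : ∀ i j, ∑ a, ((V a)ᵀ * V a) i j = (d : ℝ) - 2 + T i j * T i j := by
    intro i j
    have e1 : ∀ a, ((V a)ᵀ * V a) i j
        = 1 - X a i * X a i - X a j * X a j + (X a i * X a j) * T i j := by
      intro a
      simp only [Matrix.mul_apply, Matrix.transpose_apply]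
      rw [Finset.sum_congr rfl fun b _ => hVVterm a i j b, Finset.sum_add_distrib]
      simp only [Finset.sum_ite_eq', Finset.mem_univ, if_true]
      congr 1
      have : ∀ b, (X a i * X b i) * (X a j * X b j) = (X a i * X a j) * (X b i * X b j) := by
        intro b; ring
      rw [Finset.sum_congr rfl fun b _ => this b, ← Finset.mul_sum]
    rw [Finset.sum_congr rfl fun a _ => e1 a]
    rw [Finset.sum_add_distrib, Finset.sum_sub_distrib, Finset.sum_sub_distrib,
      hXsq i, hXsq j, ← Finset.sum_mul]
    have h2 : ∑ a, X a i * X a j = T i j := rfl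
    rw [h2]
    simp [Finset.card_univ]
    ring
  have hEnt : ∀ a i j, (Xᵀ * V a + (V a)ᵀ * X) i j = (1 - T i j) * (X a i + X a j) := by
    intro a i j
    rw [Matrix.add_apply, hXV, hVX]; ring
  have hSumSq : ∀ i j, ∑ a, ((1 - T i j) * (X a i + X a j)) ^ 2
      = (1 - T i j) ^ 2 * (2 + 2 * T i j) := by
    intro i j
    have e1 : ∀ a, ((1 - T i j) * (X a i + X a j)) ^ 2
        = (1 - T i j) ^ 2 * (X a i * X a i) + (1 - T i j) ^ 2 * (2 * (X a i * X a j))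
          + (1 - T i j) ^ 2 * (X a j * X a j) := by
      intro a; ring
    have h2 : ∑ a, X a i * X a j = T i j := rfl
    have f1 : ∑ a, (1 - T i j) ^ 2 * (X a i * X a i) = (1 - T i j) ^ 2 := by
      rw [← Finset.mul_sum, hXsq i, mul_one]
    have f2 : ∑ a, (1 - T i j) ^ 2 * (2 * (X a i * X a j))
        = (1 - T i j) ^ 2 * (2 * T i j) := by
      rw [← Finset.mul_sum, ← Finset.mul_sum, h2]
    have f3 : ∑ a, (1 - T i j) ^ 2 * (X a j * X a j) = (1 - T i j) ^ 2 := by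
      rw [← Finset.mul_sum, hXsq j, mul_one]
    rw [Finset.sum_congr rfl fun a _ => e1 a, Finset.sum_add_distrib, Finset.sum_add_distrib,
      f1, f2, f3]
    ring
  have hS : ∀ i j, Smat W X d1 i j
      = (if i = j then ∑ k, T i k * (W k i * d1 (T k i)) else 0) - W i j * d1 (T i j) := by
    intro i j
    simp only [Smat, ddiag, Amat, Matrix.sub_apply, Matrix.diagonal_apply, Matrix.mul_apply,
      Matrix.hadamard_apply, Matrix.map_apply, hXX]
  -- sum the Hessian inequality over the test directions
  have hsum0 : ∑ a : Fin d, (-(frob ((V a)ᵀ * V a) (Smat W X d1))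
      + 1 / 2 * frob ((Xᵀ * V a + (V a)ᵀ * X).map fun t => t ^ 2)
          (Matrix.hadamard W ((Xᵀ * X).map d2))) ≤ 0 :=
    Finset.sum_nonpos fun a _ => hhess (V a) (fun j => htang a j)
  have h1 : ∑ a : Fin d, frob ((V a)ᵀ * V a) (Smat W X d1)
      = ∑ i, ∑ j, ((d : ℝ) - 2 + T i j * T i j) * Smat W X d1 i j := by
    simp only [frob]
    rw [Finset.sum_comm]
    refine Finset.sum_congr rfl fun i _ => ?_
    rw [Finset.sum_comm]
    refine Finset.sum_congr rfl fun j _ => ?_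
    rw [← Finset.sum_mul, hSumVV]
  have h2 : ∑ a : Fin d, frob ((Xᵀ * V a + (V a)ᵀ * X).map fun t => t ^ 2)
        (Matrix.hadamard W ((Xᵀ * X).map d2))
      = ∑ i, ∑ j, ((1 - T i j) ^ 2 * (2 + 2 * T i j)) * (W i j * d2 (T i j)) := by
    simp only [frob, Matrix.map_apply, Matrix.hadamard_apply, hXX]
    rw [Finset.sum_comm]
    refine Finset.sum_congr rfl fun i _ => ?_
    rw [Finset.sum_comm]
    refine Finset.sum_congr rfl fun j _ => ?_
    rw [← Finset.sum_mul]
    congr 1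
    rw [Finset.sum_congr rfl fun a _ => by rw [hEnt a i j]]
    exact hSumSq i j
  have h3 : ∑ i, ∑ j, ((d : ℝ) - 2 + T i j * T i j) * Smat W X d1 i j
      = ∑ i, ∑ j, (W i j * d1 (T i j))
          * (((d : ℝ) - 1) * T i j - ((d : ℝ) - 2) - T i j * T i j) := by
    have hmain : ∀ i, ∑ j, ((d : ℝ) - 2 + T i j * T i j) * Smat W X d1 i j
        = ((d : ℝ) - 1) * (∑ k, T i k * (W k i * d1 (T k i)))
          - ∑ j, ((d : ℝ) - 2 + T i j * T i j) * (W i j * d1 (T i j)) := by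
      intro i
      have e1 : ∀ j, ((d : ℝ) - 2 + T i j * T i j) * Smat W X d1 i j
          = ((d : ℝ) - 2 + T i j * T i j)
              * (if i = j then ∑ k, T i k * (W k i * d1 (T k i)) else 0)
            - ((d : ℝ) - 2 + T i j * T i j) * (W i j * d1 (T i j)) := by
        intro j; rw [hS i j]; ring
      rw [Finset.sum_congr rfl fun j _ => e1 j, Finset.sum_sub_distrib]
      congr 1
      simp only [mul_ite, mul_zero, Finset.sum_ite_eq, Finset.mem_univ, if_true]
      rw [hTii]; ring
    rw [Finset.sum_congr rfl fun i _ => hmain i, Finset.sum_sub_distrib]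
    have hR : ∀ i j, (W i j * d1 (T i j))
          * (((d : ℝ) - 1) * T i j - ((d : ℝ) - 2) - T i j * T i j)
        = (W i j * d1 (T i j)) * (((d : ℝ) - 1) * T i j)
          - ((d : ℝ) - 2 + T i j * T i j) * (W i j * d1 (T i j)) := by
      intro i j; ring
    rw [Finset.sum_congr rfl fun i _ =>
      Finset.sum_congr rfl fun j _ => hR i j]
    simp only [Finset.sum_sub_distrib]
    congr 1
    refine Finset.sum_congr rfl fun i _ => ?_
    rw [Finset.mul_sum]
    refine Finset.sum_congr rfl fun k _ => ?_
    rw [hWs k i, hTsymm k i]; ring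
  -- the per-pair nonnegative quantity
  set G : Fin n → Fin n → ℝ := fun i j =>
    (W i j * d1 (T i j)) * ((1 - T i j) * ((d : ℝ) - 2 - T i j))
      + (W i j * d2 (T i j)) * ((1 - T i j) ^ 2 * (1 + T i j)) with hGdef
  have hcomb : ∑ a : Fin d, (-(frob ((V a)ᵀ * V a) (Smat W X d1))
      + 1 / 2 * frob ((Xᵀ * V a + (V a)ᵀ * X).map fun t => t ^ 2)
          (Matrix.hadamard W ((Xᵀ * X).map d2)))
      = ∑ i, ∑ j, G i j := by
    rw [Finset.sum_add_distrib, Finset.sum_neg_distrib, ← Finset.mul_sum, h1, h2, h3,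
      ← double_sum_comb]
    refine Finset.sum_congr rfl fun i _ => Finset.sum_congr rfl fun j _ => ?_
    simp only [hGdef]; ring
  have hGle : ∑ i, ∑ j, G i j ≤ 0 := hcomb ▸ hsum0
  have hGnn : ∀ i j, 0 ≤ G i j := by
    intro i j
    have ht1 := hT1 i j
    have htm1 := hTm1 i j
    have hmem : T i j ∈ Set.Icc (-1 : ℝ) 1 := ⟨htm1, ht1⟩
    have hp1 := hd1pos _ hmem
    have hp2 := hd2nonneg _ hmem
    have hw := hWnonneg i j
    have t1 : 0 ≤ (W i j * d1 (T i j)) * ((1 - T i j) * ((d : ℝ) - 2 - T i j)) :=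
      mul_nonneg (mul_nonneg hw hp1.le)
        (mul_nonneg (by linarith) (by linarith))
    have t2 : 0 ≤ (W i j * d2 (T i j)) * ((1 - T i j) ^ 2 * (1 + T i j)) :=
      mul_nonneg (mul_nonneg hw hp2)
        (mul_nonneg (sq_nonneg _) (by linarith))
    simp only [hGdef]
    linarith
  have hGz : ∀ i j, G i j = 0 := by
    have hz : ∑ i, ∑ j, G i j = 0 :=
      le_antisymm hGle (Finset.sum_nonneg fun i _ => Finset.sum_nonneg fun j _ => hGnn i j)
    have h1' := (Finset.sum_eq_zero_iff_of_nonneg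
      (fun i _ => Finset.sum_nonneg fun j _ => hGnn i j)).mp hz
    intro i j
    exact (Finset.sum_eq_zero_iff_of_nonneg (fun j _ => hGnn i j)).mp
      (h1' i (Finset.mem_univ i)) j (Finset.mem_univ j)
  have hedge : ∀ i j, 0 < W i j → T i j = 1 := by
    intro i j hw
    have hz := hGz i j
    simp only [hGdef] at hz
    have ht1 := hT1 i j
    have htm1 := hTm1 i j
    have hmem : T i j ∈ Set.Icc (-1 : ℝ) 1 := ⟨htm1, ht1⟩
    have hp1 := hd1pos _ hmem
    have hp2 := hd2nonneg _ hmem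
    have t2 : 0 ≤ (W i j * d2 (T i j)) * ((1 - T i j) ^ 2 * (1 + T i j)) :=
      mul_nonneg (mul_nonneg (hWnonneg i j) hp2)
        (mul_nonneg (sq_nonneg _) (by linarith))
    have t1 : 0 ≤ (W i j * d1 (T i j)) * ((1 - T i j) * ((d : ℝ) - 2 - T i j)) :=
      mul_nonneg (mul_nonneg (hWnonneg i j) hp1.le)
        (mul_nonneg (by linarith) (by linarith))
    have hA : (W i j * d1 (T i j)) * ((1 - T i j) * ((d : ℝ) - 2 - T i j)) = 0 := by
      linarith
    have hpos : 0 < W i j * d1 (T i j) := mul_pos hw hp1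
    have hfac : (1 - T i j) * ((d : ℝ) - 2 - T i j) = 0 := by
      rcases mul_eq_zero.mp hA with h | h
      · exact absurd h (ne_of_gt hpos)
      · exact h
    have hsq : (1 - T i j) ^ 2 ≤ 0 := by
      nlinarith [mul_nonneg (sub_nonneg.mpr ht1) (show (0 : ℝ) ≤ (d : ℝ) - 3 by linarith)]
    have : (1 - T i j) ^ 2 = 0 := le_antisymm hsq (sq_nonneg _)
    have := (pow_eq_zero_iff (two_ne_zero)).mp this
    linarith [sub_eq_zero.mp this]
  have hcols : ∀ i j, 0 < W i j → ∀ a, X a i = X a j := by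
    intro i j hw a
    have ht := hedge i j hw
    have hzero : ∑ b, (X b i - X b j) ^ 2 = 0 := by
      have e1 : ∀ b, (X b i - X b j) ^ 2
          = X b i * X b i - 2 * (X b i * X b j) + X b j * X b j := by
        intro b; ring
      rw [Finset.sum_congr rfl fun b _ => e1 b, Finset.sum_add_distrib,
        Finset.sum_sub_distrib, hXsq i, hXsq j, ← Finset.mul_sum]
      have h2 : ∑ b, X b i * X b j = T i j := rfl
      rw [h2, ht]; ring
    have h0 := (Finset.sum_eq_zero_iff_of_nonneg (fun b _ => sq_nonneg _)).mp
      hzero a (Finset.mem_univ a)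
    have h0' := (pow_eq_zero_iff (two_ne_zero)).mp h0
    linarith [sub_eq_zero.mp h0']
  have hc : (SimpleGraph.fromRel fun i j : Fin n => 0 < W i j).Connected := hconn
  have part1 : ∀ j j' : Fin n, ∀ i, X i j = X i j' := by
    intro j j' i
    have hadj : ∀ u v : Fin n,
        (SimpleGraph.fromRel fun i j : Fin n => 0 < W i j).Adj u v → X i u = X i v := by
      intro u v huv
      rw [SimpleGraph.fromRel_adj] at huv
      rcases huv.2 with h | h
      · exact hcols u v h i
      · exact (hcols v u h i).symm
    exact reach_const (fun k => X i k) hadj (hc.preconnected j j')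
  refine ⟨part1, ?_⟩
  have hXXone : ∀ i j, T i j = 1 := by
    intro i j
    calc T i j = ∑ a, X a i * X a i :=
          Finset.sum_congr rfl fun a _ => by rw [part1 j i a]
      _ = 1 := hXsq i
  have hcont : ContinuousOn φ (Set.Icc (-1 : ℝ) 1) :=
    fun x hx => (hder1 x hx).continuousAt.continuousWithinAt
  have hderiv : ∀ x ∈ interior (Set.Icc (-1 : ℝ) 1), 0 < deriv φ x := by
    intro x hx
    rw [interior_Icc] at hx
    have hx' := Set.Ioo_subset_Icc_self hx
    rw [(hder1 x hx').deriv]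
    exact hd1pos x hx'
  have hmono : MonotoneOn φ (Set.Icc (-1 : ℝ) 1) :=
    (strictMonoOn_of_deriv_pos (convex_Icc _ _) hcont hderiv).monotoneOn
  intro Y hY
  have hkey : ∀ i j, W i j * ((Yᵀ * Y).map φ) i j ≤ W i j * ((Xᵀ * X).map φ) i j := by
    intro i j
    have hYe : (Yᵀ * Y) i j = ∑ a, Y a i * Y a j := by
      simp [Matrix.mul_apply]
    have hYm : (Yᵀ * Y) i j ∈ Set.Icc (-1 : ℝ) 1 := by
      rw [hYe]; exact hTmem Y hY i j
    have h1m : (1 : ℝ) ∈ Set.Icc (-1 : ℝ) 1 := by norm_num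
    have hle : φ ((Yᵀ * Y) i j) ≤ φ 1 := hmono hYm h1m hYm.2
    have hx1 : (Xᵀ * X) i j = 1 := by rw [hXX]; exact hXXone i j
    simp only [Matrix.map_apply, hx1]
    exact mul_le_mul_of_nonneg_left hle (hWnonneg i j)
  have hfr : frob W ((Yᵀ * Y).map φ) ≤ frob W ((Xᵀ * X).map φ) := by
    unfold frob
    exact Finset.sum_le_sum fun i _ => Finset.sum_le_sum fun j _ => hkey i j
  unfold fval
  linarith
end
end

section
/- Let d ≥ 3, let the graph W be connected, let β > 0, and let φ(t) = e^{βt}/β. If X ∈ ℝ^{d×n} with unit-norm columns is critical for f and has negative-semidefinite Hessian, then all columns of X are equal: x_1 = ⋯ = x_n. -/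
open Matrix

noncomputable section

/-! Test the second-order condition against the `d` tangent directions `V_k` whose `j`-th column
is the projection `e_k - (x_j)_k x_j` of the `k`-th basis vector onto the tangent space at `x_j`.
Summed over `k`, the Hessian forms collapse to `∑ᵢⱼ w_ij κ(x_iᵀx_j)` with
`κ(t) = (1 - t)((d - 2 - t) φ'(t) + (1 - t²) φ''(t))`. For `φ(t) = e^{βt}/β` and `d ≥ 3`, `κ` is
positive on `[-1, 1)`, so negative semidefiniteness forces `x_iᵀx_j = 1`, i.e. `x_i = x_j`, along
every edge of `W`, and connectivity spreads this to all columns. -/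

section

variable {d : ℕ} {ι : Type*}

lemma transpose_mul_self_apply (X : Matrix (Fin d) ι ℝ) (i j : ι) :
    (Xᵀ * X) i j = ∑ a, X a i * X a j := by
  simp [Matrix.mul_apply]

lemma transpose_mul_self_comm (X : Matrix (Fin d) ι ℝ) (i j : ι) :
    (Xᵀ * X) j i = (Xᵀ * X) i j := by
  simp only [transpose_mul_self_apply, mul_comm]

def coordTangent (X : Matrix (Fin d) ι ℝ) (k : Fin d) : Matrix (Fin d) ι ℝ :=
  Matrix.of fun a j => (if a = k then 1 else 0) - X k j * X a j

lemma transpose_mul_coordTangent_add (X : Matrix (Fin d) ι ℝ) (k : Fin d) (i j : ι) :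
    (Xᵀ * coordTangent X k + (coordTangent X k)ᵀ * X) i j
      = (X k i + X k j) * (1 - (Xᵀ * X) i j) := by
  simp only [Matrix.add_apply, Matrix.mul_apply, coordTangent, Matrix.transpose_apply,
    Matrix.of_apply, mul_sub, sub_mul, Finset.sum_sub_distrib, mul_ite, ite_mul, mul_one, one_mul,
    mul_zero, zero_mul, Finset.sum_ite_eq', Finset.mem_univ, if_true]
  simp only [mul_left_comm _ (X k j), mul_assoc (X k i), ← Finset.mul_sum]
  ring

def hessTraceKernel (d : ℕ) (d1 d2 : ℝ → ℝ) (t : ℝ) : ℝ :=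
  (1 - t) * ((d - 2 - t) * d1 t + (1 - t ^ 2) * d2 t)

variable [Fintype ι] {X : Matrix (Fin d) ι ℝ}

namespace unitCols

lemma sum_mul_self (hX : unitCols X) (j : ι) : ∑ a, X a j * X a j = 1 := by
  simpa [pow_two] using hX j

lemma gram_diag (hX : unitCols X) (j : ι) : (Xᵀ * X) j j = 1 := by
  rw [transpose_mul_self_apply, hX.sum_mul_self]

lemma abs_gram_le_one (hX : unitCols X) (i j : ι) : |(Xᵀ * X) i j| ≤ 1 := by
  have h := Finset.sum_mul_sq_le_sq_mul_sq Finset.univ (fun a => X a i) (fun a => X a j)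
  rw [hX i, hX j, one_mul, ← transpose_mul_self_apply] at h
  exact (sq_le_one_iff_abs_le_one _).mp h

lemma sum_add_sq (hX : unitCols X) (i j : ι) :
    ∑ a, (X a i + X a j) ^ 2 = 2 + 2 * (Xᵀ * X) i j := by
  simp only [add_sq, Finset.sum_add_distrib, hX i, hX j, transpose_mul_self_apply, mul_assoc,
    ← Finset.mul_sum]
  ring

lemma col_eq_of_gram_eq_one (hX : unitCols X) {i j : ι} (h : (Xᵀ * X) i j = 1) :
    Xᵀ i = Xᵀ j := by
  have hsq : ∑ a, (X a i - X a j) ^ 2 = 0 := by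
    simp only [sub_sq, Finset.sum_sub_distrib, Finset.sum_add_distrib, hX i, hX j, mul_assoc,
      ← Finset.mul_sum, ← transpose_mul_self_apply, h]
    ring
  funext a
  have := (Finset.sum_eq_zero_iff_of_nonneg fun b _ => sq_nonneg (X b i - X b j)).mp hsq a
    (Finset.mem_univ a)
  simpa [sub_eq_zero] using this

lemma transpose_mul_coordTangent_diag (hX : unitCols X) (k : Fin d) (j : ι) :
    (Xᵀ * coordTangent X k) j j = 0 := by
  simp [Matrix.mul_apply, coordTangent, mul_sub, mul_left_comm _ (X k j), ← Finset.mul_sum,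
    hX.sum_mul_self]

lemma sum_coordTangent_gram (hX : unitCols X) (i j : ι) :
    ∑ k, ((coordTangent X k)ᵀ * coordTangent X k) i j = d - 2 + (Xᵀ * X) i j ^ 2 := by
  simp only [Matrix.mul_apply, Matrix.transpose_apply, coordTangent, Matrix.of_apply, sub_mul,
    mul_sub, ite_mul, mul_ite, one_mul, mul_one, zero_mul, mul_zero, Finset.sum_sub_distrib]
  rw [Finset.sum_comm]
  simp only [Finset.sum_sub_distrib, Finset.sum_ite_eq, Finset.sum_ite_eq', Finset.mem_univ,
    if_true]
  rw [hX.sum_mul_self, hX.sum_mul_self, sq, Finset.sum_mul_sum, Finset.sum_const,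
    Finset.card_univ, Fintype.card_fin, nsmul_eq_mul, mul_one]
  have hreorder : ∀ a b : Fin d,
      X a i * X b i * (X a j * X b j) = X a i * X a j * (X b i * X b j) := fun a b => by ring
  simp only [hreorder]
  ring

end unitCols

variable [DecidableEq ι]

lemma sum_mul_Smat (c : ℝ) (W : Matrix ι ι ℝ) (hX : unitCols X) (d1 : ℝ → ℝ) :
    ∑ i, ∑ j, (c + (Xᵀ * X) i j ^ 2) * Smat W X d1 i j
      = ∑ i, ∑ j, Amat W X d1 i j * (((Xᵀ * X) i j - 1) * (c - (Xᵀ * X) i j)) := by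
  have hS : ∀ i j, Smat W X d1 i j
      = (if i = j then (Xᵀ * X * Amat W X d1) i i else 0) - Amat W X d1 i j := fun i j => by
    by_cases h : i = j <;> simp [Smat, ddiag, h]
  have hdiag : ∑ i, (c + (Xᵀ * X) i i ^ 2) * (Xᵀ * X * Amat W X d1) i i
      = ∑ i, ∑ j, (c + 1) * ((Xᵀ * X) i j * Amat W X d1 i j) := by
    simp only [hX.gram_diag, one_pow, Matrix.mul_apply (M := Xᵀ * X), Finset.mul_sum]
    rw [Finset.sum_comm]
    simp only [transpose_mul_self_comm X]
  conv_lhs => simp only [hS, mul_sub, mul_ite, mul_zero, Finset.sum_sub_distrib,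
    Finset.sum_ite_eq, Finset.mem_univ, if_true]
  rw [hdiag, ← Finset.sum_sub_distrib]
  refine Finset.sum_congr rfl fun i _ => ?_
  rw [← Finset.sum_sub_distrib]
  refine Finset.sum_congr rfl fun j _ => ?_
  ring

-- `HessNegSemidef W X d1 d2` unfolds to `hessForm W X d1 d2 V ≤ 0` for all tangent `V`.
def hessForm (W : Matrix ι ι ℝ) (X : Matrix (Fin d) ι ℝ) (d1 d2 : ℝ → ℝ)
    (V : Matrix (Fin d) ι ℝ) : ℝ :=
  -(frob (Vᵀ * V) (Smat W X d1))
    + (1 / 2) * frob ((Xᵀ * V + Vᵀ * X).map fun t => t ^ 2) (Matrix.hadamard W ((Xᵀ * X).map d2))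

lemma unitCols.sum_hessForm_coordTangent (hX : unitCols X) (W : Matrix ι ι ℝ) (d1 d2 : ℝ → ℝ) :
    ∑ k, hessForm W X d1 d2 (coordTangent X k)
      = ∑ i, ∑ j, W i j * hessTraceKernel d d1 d2 ((Xᵀ * X) i j) := by
  have hgram : ∑ k, frob ((coordTangent X k)ᵀ * coordTangent X k) (Smat W X d1)
      = ∑ i, ∑ j, ((d - 2 : ℝ) + (Xᵀ * X) i j ^ 2) * Smat W X d1 i j := by
    simp only [frob, ← hX.sum_coordTangent_gram, Finset.sum_mul]
    rw [Finset.sum_comm]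
    exact Finset.sum_congr rfl fun i _ => Finset.sum_comm
  have hsymm : ∑ k, frob ((Xᵀ * coordTangent X k + (coordTangent X k)ᵀ * X).map fun t => t ^ 2)
        (Matrix.hadamard W ((Xᵀ * X).map d2))
      = ∑ i, ∑ j, (2 + 2 * (Xᵀ * X) i j) * (1 - (Xᵀ * X) i j) ^ 2
          * (W i j * d2 ((Xᵀ * X) i j)) := by
    simp only [frob, Matrix.map_apply, Matrix.hadamard_apply, transpose_mul_coordTangent_add,
      mul_pow, ← hX.sum_add_sq, Finset.sum_mul]
    rw [Finset.sum_comm]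
    exact Finset.sum_congr rfl fun i _ => Finset.sum_comm
  simp only [hessForm, Finset.sum_add_distrib, Finset.sum_neg_distrib, ← Finset.mul_sum]
  rw [hgram, hsymm, sum_mul_Smat _ _ hX, Finset.mul_sum, ← Finset.sum_neg_distrib,
    ← Finset.sum_add_distrib]
  refine Finset.sum_congr rfl fun i _ => ?_
  rw [Finset.mul_sum, ← Finset.sum_neg_distrib, ← Finset.sum_add_distrib]
  refine Finset.sum_congr rfl fun j _ => ?_
  simp only [Amat, Matrix.hadamard_apply, Matrix.map_apply, hessTraceKernel]
  ring

end

lemma ConnectedW.eq_of_adj {ι α : Type*} {W : Matrix ι ι ℝ} (hW : ConnectedW W) {f : ι → α}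
    (hf : ∀ i j, 0 < W i j → f i = f j) (i j : ι) : f i = f j := by
  induction (SimpleGraph.reachable_iff_reflTransGen i j).mp (hW.preconnected i j) with
  | refl => rfl
  | tail _ hadj ih => exact ih.trans (hadj.2.elim (hf _ _) fun h => (hf _ _ h).symm)

theorem unitCols.cols_eq_of_hessNegSemidef {d : ℕ} {ι : Type*} [Fintype ι] [DecidableEq ι]
    {X : Matrix (Fin d) ι ℝ} (hX : unitCols X) {W : Matrix ι ι ℝ} (hW : ∀ i j, 0 ≤ W i j)
    (hconn : ConnectedW W) {d1 d2 : ℝ → ℝ}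
    (hkernel : ∀ t, -1 ≤ t → t < 1 → 0 < hessTraceKernel d d1 d2 t)
    (hhess : HessNegSemidef W X d1 d2) (i j : ι) : Xᵀ i = Xᵀ j := by
  set κ : ι × ι → ℝ := fun p => W p.1 p.2 * hessTraceKernel d d1 d2 ((Xᵀ * X) p.1 p.2)
  have hκ_nonneg : 0 ≤ κ := fun p => by
    obtain ⟨hlo, hhi⟩ := abs_le.mp (hX.abs_gram_le_one p.1 p.2)
    refine mul_nonneg (hW _ _) ?_
    rcases hhi.lt_or_eq with hlt | heq
    · exact (hkernel _ hlo hlt).le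
    · simp [hessTraceKernel, heq]
  have hκ_sum : ∑ p, κ p ≤ 0 :=
    calc ∑ p, κ p = ∑ k, hessForm W X d1 d2 (coordTangent X k) := by
          rw [Fintype.sum_prod_type, hX.sum_hessForm_coordTangent]
      _ ≤ 0 := Finset.sum_nonpos fun k _ => hhess _ (hX.transpose_mul_coordTangent_diag k)
  have hκ_zero : κ = 0 := (Fintype.sum_eq_zero_iff_of_nonneg hκ_nonneg).mp
    (hκ_sum.antisymm (Fintype.sum_nonneg hκ_nonneg))
  refine hconn.eq_of_adj (f := Xᵀ) (fun i j hWij => hX.col_eq_of_gram_eq_one ?_) i j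
  by_contra hne
  obtain ⟨hlo, hhi⟩ := abs_le.mp (hX.abs_gram_le_one i j)
  exact (mul_pos hWij (hkernel _ hlo (hhi.lt_of_ne hne))).ne' (congrFun hκ_zero (i, j))

lemma hasDerivAt_exp_mul (β t : ℝ) :
    HasDerivAt (fun t => Real.exp (β * t)) (β * Real.exp (β * t)) t := by
  simpa [mul_comm] using ((hasDerivAt_id t).const_mul β).exp

lemma deriv_exp_mul (β : ℝ) :
    deriv (fun t => Real.exp (β * t)) = fun t => β * Real.exp (β * t) :=
  funext fun t => (hasDerivAt_exp_mul β t).deriv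

lemma deriv_exp_mul_div {β : ℝ} (hβ : β ≠ 0) :
    deriv (fun t => Real.exp (β * t) / β) = fun t => Real.exp (β * t) :=
  funext fun t => by simpa [hβ] using ((hasDerivAt_exp_mul β t).div_const β).deriv

lemma hessTraceKernel_exp_pos {d : ℕ} (hd : 3 ≤ d) {β : ℝ} (hβ : 0 ≤ β) {t : ℝ} (ht : -1 ≤ t)
    (ht' : t < 1) :
    0 < hessTraceKernel d (fun t => Real.exp (β * t)) (fun t => β * Real.exp (β * t)) t := by
  have hd' : (3 : ℝ) ≤ d := by exact_mod_cast hd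
  have hexp := Real.exp_pos (β * t)
  have h1 : 0 < (d - 2 - t) * Real.exp (β * t) := mul_pos (by linarith) hexp
  have h2 : 0 ≤ (1 - t ^ 2) * (β * Real.exp (β * t)) :=
    mul_nonneg (by nlinarith) (mul_nonneg hβ hexp.le)
  exact mul_pos (by linarith) (by linarith)

theorem synchronization_on_spheres_exponential_general
    {d n : ℕ} (hd : 3 ≤ d)
    (W : Matrix (Fin n) (Fin n) ℝ) (hWnonneg : ∀ i j, 0 ≤ W i j)
    (hconn : ConnectedW W)
    (β : ℝ) (hβ : 0 < β)
    (X : Matrix (Fin d) (Fin n) ℝ) (hX : unitCols X)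
    (hhess : HessNegSemidef W X (deriv fun t => Real.exp (β * t) / β)
      (deriv (deriv fun t => Real.exp (β * t) / β))) :
    ∀ j j' : Fin n, ∀ i, X i j = X i j' := by
  rw [deriv_exp_mul_div hβ.ne', deriv_exp_mul] at hhess
  intro j j' i
  exact congrFun (hX.cols_eq_of_hessNegSemidef hWnonneg hconn
    (fun _ => hessTraceKernel_exp_pos hd hβ.le) hhess j j') i

/-- Corollary 1 for spheres, exponential `φ(t) = e^{βt}/β`, `β > 0`. -/
theorem synchronization_on_spheres_exponential
    {d n : ℕ} (hd : 3 ≤ d) (hn : 1 ≤ n)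
    (W : Matrix (Fin n) (Fin n) ℝ) (hWsymm : W.IsSymm) (hWnonneg : ∀ i j, 0 ≤ W i j)
    (hconn : ConnectedW W)
    (β : ℝ) (hβ : 0 < β)
    (X : Matrix (Fin d) (Fin n) ℝ) (hX : unitCols X)
    (hcrit : IsCritical W X (deriv fun t => Real.exp (β * t) / β))
    (hhess : HessNegSemidef W X (deriv fun t => Real.exp (β * t) / β)
      (deriv (deriv fun t => Real.exp (β * t) / β))) :
    ∀ j j' : Fin n, ∀ i, X i j = X i j' :=
  synchronization_on_spheres_exponential_general hd W hWnonneg hconn β hβ X hX hhess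
end
end

section
/- Fix n ≥ 1 and d = 2. Assume φ'(t) > 0 for all t ∈ [−1,1] and that tφ'(t) − (1−t²)φ''(t) < 0 for all t ∈ [−1, cos(π/n)). Let the graph W be connected. If X ∈ ℝ^{2×n} with unit-norm columns is critical for f and has negative-semidefinite Hessian, then all columns of X are equal: x_1 = ⋯ = x_n. -/
open Matrix

noncomputable section

/-!
Write `x_j = (cos θ_j, sin θ_j)`. Testing the Hessian with `ẋ_j = α_j x_j^⊥` gives
`∑ m_ij (α_i - α_j)² ≥ 0` for `m_ij = w_ij h(x_iᵀx_j)`, so the edges with `h ≥ 0` still connect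
the graph. By the hypothesis on `h` such an edge joins two points at angular distance at most
`π/n`, once the angles are lifted to an interval of length `2π - 2π/(n+1)` (some arc of length
`2π/(n+1)` contains no point). A path has at most `n - 1` edges, so all points lie in an open half
circle. At the point of largest angle all terms of the first-order condition
`∑_k w_kj φ'(x_kᵀx_j) sin(θ_k - θ_j) = 0` are `≤ 0`, so its neighbours share its angle, and
connectivity spreads this to every point.
-/

open Finset Real

theorem sum_sum_mul_sub_sq_of_symm {ι : Type*} [Fintype ι] (g : ι → ι → ℝ)
    (hg : ∀ i j, g i j = g j i) (α : ι → ℝ) :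
    ∑ i, ∑ j, g i j * (α i - α j) ^ 2 = 2 * ∑ i, ∑ j, g i j * (α i ^ 2 - α i * α j) := by
  have hswap : ∑ i, ∑ j, g i j * (α j ^ 2 - α j * α i)
      = ∑ i, ∑ j, g i j * (α i ^ 2 - α i * α j) := by
    rw [Finset.sum_comm]
    simp only [hg]
  calc ∑ i, ∑ j, g i j * (α i - α j) ^ 2
      = ∑ i, ∑ j, (g i j * (α i ^ 2 - α i * α j) + g i j * (α j ^ 2 - α j * α i)) := by
        congr! 2; ring
    _ = _ := by simp only [Finset.sum_add_distrib, hswap]; ring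

namespace SimpleGraph

variable {V : Type*} {G : SimpleGraph V}

theorem Connected.mem_of_forall_adj_mem (hG : G.Connected) {S : Set V}
    (hS : ∀ a ∈ S, ∀ b, G.Adj a b → b ∈ S) {u : V} (hu : u ∈ S) (v : V) : v ∈ S := by
  by_contra hv
  obtain ⟨p⟩ := hG u v
  obtain ⟨d, -, hd, hd'⟩ := p.exists_boundary_dart S hu hv
  exact hd' (hS _ hd _ d.adj)

theorem Walk.abs_sub_le_length_mul {θ : V → ℝ} {δ : ℝ}
    (hθ : ∀ a b, G.Adj a b → |θ a - θ b| ≤ δ) {u v : V} (p : G.Walk u v) :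
    |θ u - θ v| ≤ p.length * δ := by
  induction p with
  | nil => simp
  | @cons a b c h q ih =>
    rw [Walk.length_cons, Nat.cast_succ]
    linarith [abs_sub_le (θ a) (θ b) (θ c), hθ _ _ h]

theorem Reachable.abs_sub_le [Fintype V] {θ : V → ℝ} {δ : ℝ} (hδ : 0 ≤ δ)
    (hθ : ∀ a b, G.Adj a b → |θ a - θ b| ≤ δ) {u v : V} (h : G.Reachable u v) :
    |θ u - θ v| ≤ (Fintype.card V - 1) * δ := by
  classical
  obtain ⟨p⟩ := h
  have hlen : (p.bypass.length : ℝ) + 1 ≤ Fintype.card V := by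
    exact_mod_cast p.bypass_isPath.length_lt
  calc |θ u - θ v| ≤ p.bypass.length * δ := p.bypass.abs_sub_le_length_mul hθ
    _ ≤ (Fintype.card V - 1) * δ := by gcongr; linarith

/-- Otherwise the indicator of a component of the subgraph makes the quadratic form negative. -/
theorem Connected.inf_fromRel_nonneg [Fintype V] (hG : G.Connected) {M : Matrix V V ℝ}
    (hM : M.IsSymm) (hMG : ∀ i j, i ≠ j → ¬ G.Adj i j → M i j = 0)
    (hq : ∀ α : V → ℝ, 0 ≤ ∑ i, ∑ j, M i j * (α i - α j) ^ 2) :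
    (G ⊓ fromRel fun i j => 0 ≤ M i j).Connected := by
  classical
  have := hG.nonempty
  refine ⟨fun u v => ?_⟩
  by_contra huv
  set S : Set V := {x | (G ⊓ fromRel fun i j => 0 ≤ M i j).Reachable u x}
  have hcross : ∀ i ∈ S, ∀ j ∉ S, M i j ≤ 0 ∧ (G.Adj i j → M i j < 0) := by
    intro i hi j hj
    have hne : i ≠ j := by rintro rfl; exact hj hi
    have hneg : G.Adj i j → M i j < 0 := fun hij => by
      by_contra! hM0
      exact hj (hi.trans (Adj.reachable ((inf_adj _ _ _ _).2
        ⟨hij, (fromRel_adj _ _ _).2 ⟨hne, Or.inl hM0⟩⟩)))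
    by_cases hij : G.Adj i j
    · exact ⟨(hneg hij).le, hneg⟩
    · exact ⟨(hMG i j hne hij).le, fun h => absurd h hij⟩
  obtain ⟨p⟩ := hG u v
  obtain ⟨d, -, hd, hd'⟩ := p.exists_boundary_dart S (Reachable.refl u) huv
  let α : V → ℝ := fun x => if x ∈ S then 1 else 0
  have hterm : ∀ i j, M i j * (α i - α j) ^ 2 ≤ 0 := by
    intro i j
    by_cases hi : i ∈ S <;> by_cases hj : j ∈ S <;> simp only [α, hi, hj, if_true, if_false]
    · simp
    · simpa using (hcross i hi j hj).1
    · simpa [hM.apply i j] using (hcross j hj i hi).1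
    · simp
  have hsum : ∑ i, ∑ j, M i j * (α i - α j) ^ 2 < 0 := by
    refine Finset.sum_neg' (fun i _ => Finset.sum_nonpos fun j _ => hterm i j)
      ⟨d.fst, Finset.mem_univ _, Finset.sum_neg' (fun j _ => hterm _ j)
        ⟨d.snd, Finset.mem_univ _, ?_⟩⟩
    simpa [α, hd, hd'] using (hcross _ hd _ hd').2 d.adj
  exact (hq α).not_gt hsum

end SimpleGraph

theorem exists_mem_Ico_cos_sin_eq {a b : ℝ} (h : a ^ 2 + b ^ 2 = 1) :
    ∃ ψ ∈ Set.Ico 0 (2 * π), cos ψ = a ∧ sin ψ = b := by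
  set z : ℂ := ⟨a, b⟩
  have hz : ‖z‖ = 1 := by
    rw [← pow_eq_one_iff_of_nonneg (norm_nonneg z) two_ne_zero, Complex.sq_norm,
      Complex.normSq_mk, ← h]
    ring
  have hz0 : z ≠ 0 := norm_ne_zero_iff.1 (by rw [hz]; exact one_ne_zero)
  refine ⟨toIcoMod two_pi_pos 0 z.arg, toIcoMod_mem_Ico' _ _, ?_, ?_⟩
  · rw [← Real.Angle.cos_coe, Real.Angle.coe_toIcoMod, Real.Angle.cos_coe, Complex.cos_arg hz0, hz,
      div_one]
  · rw [← Real.Angle.sin_coe, Real.Angle.coe_toIcoMod, Real.Angle.sin_coe, Complex.sin_arg, hz,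
      div_one]

/-- Among `card ι + 1` arcs of length `2π / (card ι + 1)` one contains no `ψ j`; cutting the
circle there lifts all angles into an interval of length `2π` minus that arc. -/
theorem exists_lift_abs_sub_le {ι : Type*} [Fintype ι] (ψ : ι → ℝ)
    (hψ : ∀ j, ψ j ∈ Set.Ico 0 (2 * π)) :
    ∃ θ : ι → ℝ, (∀ j, θ j = ψ j ∨ θ j = ψ j - 2 * π) ∧
      ∀ i j, |θ i - θ j| ≤ 2 * π - 2 * π / (Fintype.card ι + 1) := by
  classical
  set a := 2 * π / (Fintype.card ι + 1)
  have ha : 0 < a := by positivity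
  obtain ⟨k, hk, hkψ⟩ : ∃ k ∈ range (Fintype.card ι + 1), k ∉ univ.image fun j => ⌊ψ j / a⌋₊ :=
    exists_mem_notMem_of_card_lt_card (card_image_le.trans_lt (by simp))
  have hgap : ∀ j, ψ j < k * a ∨ (k + 1) * a ≤ ψ j := by
    intro j
    by_contra! h
    exact hkψ (mem_image.2 ⟨j, mem_univ _, (Nat.floor_eq_iff (div_nonneg (hψ j).1 ha.le)).2
      ⟨(le_div_iff₀ ha).2 h.1, (div_lt_iff₀ ha).2 h.2⟩⟩)
  have hka : (k + 1) * a ≤ 2 * π := by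
    have hk' : (k : ℝ) + 1 ≤ Fintype.card ι + 1 := by exact_mod_cast mem_range.1 hk
    calc (k + 1) * a ≤ (Fintype.card ι + 1) * a := by gcongr
      _ = 2 * π := mul_div_cancel₀ _ (by positivity)
  set θ : ι → ℝ := fun j => if (k + 1) * a ≤ ψ j then ψ j - 2 * π else ψ j
  have hθ : ∀ j, (k + 1) * a - 2 * π ≤ θ j ∧ θ j ≤ k * a := by
    intro j
    have := hψ j
    simp only [θ]
    split_ifs with h
    · constructor <;> nlinarith [this.2, ha]
    · exact ⟨by linarith [this.1], ((hgap j).resolve_right h).le⟩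
  refine ⟨θ, fun j => ?_, fun i j => abs_le.2 ⟨?_, ?_⟩⟩
  · simp only [θ]
    split_ifs <;> simp
  all_goals linarith [hθ i, hθ j]

theorem abs_le_of_cos_le_cos {t δ : ℝ} (hδ : 0 ≤ δ) (ht : |t| < 2 * π - δ)
    (h : cos δ ≤ cos t) : |t| ≤ δ := by
  rw [← cos_abs t] at h
  by_contra! hlt
  rcases le_or_gt |t| π with h1 | h1
  · exact (cos_lt_cos_of_nonneg_of_le_pi hδ h1 hlt).not_ge h
  · rw [← cos_two_pi_sub |t|] at h
    exact (cos_lt_cos_of_nonneg_of_le_pi hδ (by linarith) (by linarith)).not_ge h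

theorem unitCols.exists_angles {ι : Type*} [Fintype ι] {X : Matrix (Fin 2) ι ℝ}
    (hX : unitCols X) :
    ∃ θ : ι → ℝ, (∀ j, X 0 j = cos (θ j) ∧ X 1 j = sin (θ j)) ∧
      ∀ i j, |θ i - θ j| ≤ 2 * π - 2 * π / (Fintype.card ι + 1) := by
  choose ψ hψ hcos hsin using fun j =>
    exists_mem_Ico_cos_sin_eq (by simpa [Fin.sum_univ_two] using hX j)
  obtain ⟨θ, hθψ, hθ⟩ := exists_lift_abs_sub_le ψ hψ
  refine ⟨θ, fun j => ?_, hθ⟩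
  rcases hθψ j with h | h <;> simp [h, hcos, hsin]

theorem IsCritical.sum_vecMul_mul_Amat_eq_zero {d : ℕ} {ι : Type*} [Fintype ι] [DecidableEq ι]
    {W : Matrix ι ι ℝ} {X : Matrix (Fin d) ι ℝ} {d1 : ℝ → ℝ} (h : IsCritical W X d1) (j : ι)
    {y : Fin d → ℝ} (hy : (y ᵥ* X) j = 0) :
    ∑ k, (y ᵥ* X) k * Amat W X d1 k j = 0 := by
  have h0 : (y ᵥ* X ᵥ* Smat W X d1) j = 0 := by
    rw [Matrix.vecMul_vecMul, h, Matrix.vecMul_zero, Pi.zero_apply]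
  simp only [Matrix.vecMul, dotProduct] at hy h0 ⊢
  simpa [Smat, ddiag, Matrix.diagonal_apply, mul_sub, hy] using h0

theorem IsCritical.sum_sin_mul_Amat_eq_zero {ι : Type*} [Fintype ι] [DecidableEq ι]
    {W : Matrix ι ι ℝ} {X : Matrix (Fin 2) ι ℝ} {d1 : ℝ → ℝ} (h : IsCritical W X d1)
    {θ : ι → ℝ} (hθ : ∀ j, X 0 j = cos (θ j) ∧ X 1 j = sin (θ j)) (j : ι) :
    ∑ k, sin (θ k - θ j) * Amat W X d1 k j = 0 := by
  have hy : ∀ k, (![-X 1 j, X 0 j] ᵥ* X) k = sin (θ k - θ j) := fun k => by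
    simp [Matrix.vecMul, dotProduct, Fin.sum_univ_two, hθ, sin_sub]
    ring
  simpa only [hy] using h.sum_vecMul_mul_Amat_eq_zero j ((hy j).trans (by simp))

theorem frob_sub_right {ι κ : Type*} [Fintype ι] [Fintype κ] (A B C : Matrix ι κ ℝ) :
    frob A (B - C) = frob A B - frob A C := by
  simp only [frob, Matrix.sub_apply, mul_sub, Finset.sum_sub_distrib]

theorem frob_ddiag {ι : Type*} [Fintype ι] [DecidableEq ι] (A B : Matrix ι ι ℝ) :
    frob A (ddiag B) = ∑ i, A i i * B i i := by
  simp [frob, ddiag, Matrix.diagonal_apply]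

theorem transpose_mul_self_apply_comm {d : ℕ} {ι : Type*} (X : Matrix (Fin d) ι ℝ)
    (i j : ι) : (Xᵀ * X) i j = (Xᵀ * X) j i := by
  simp [Matrix.mul_apply, mul_comm]

theorem Mmat_isSymm {d : ℕ} {ι : Type*} [Fintype ι] {W : Matrix ι ι ℝ} (hW : W.IsSymm)
    (X : Matrix (Fin d) ι ℝ) (d1 d2 : ℝ → ℝ) : (Mmat W X d1 d2).IsSymm :=
  Matrix.IsSymm.ext fun i j => by simp [Mmat, hW.apply i j, transpose_mul_self_apply_comm X j i]

theorem unitCols.transpose_mul_self_apply_self {d : ℕ} {ι : Type*} [Fintype ι]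
    {X : Matrix (Fin d) ι ℝ} (hX : unitCols X) (i : ι) : (Xᵀ * X) i i = 1 := by
  simpa [Matrix.mul_apply, sq] using hX i

section Circle

variable {ι : Type*}

theorem transpose_mul_self_apply_fin_two (X : Matrix (Fin 2) ι ℝ) (i j : ι) :
    (Xᵀ * X) i j = X 0 i * X 0 j + X 1 i * X 1 j := by
  simp [Matrix.mul_apply, Fin.sum_univ_two]

theorem unitCols.cross_sq [Fintype ι] {X : Matrix (Fin 2) ι ℝ} (hX : unitCols X) (i j : ι) :
    (X 1 i * X 0 j - X 0 i * X 1 j) ^ 2 = 1 - (Xᵀ * X) i j ^ 2 := by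
  have hu : ∀ j, X 0 j ^ 2 + X 1 j ^ 2 = 1 := fun j => by simpa [Fin.sum_univ_two] using hX j
  rw [transpose_mul_self_apply_fin_two]
  linear_combination (X 0 j ^ 2 + X 1 j ^ 2) * hu i + hu j

def scaledPerp (X : Matrix (Fin 2) ι ℝ) (α : ι → ℝ) : Matrix (Fin 2) ι ℝ :=
  Matrix.of fun a j => α j * ![-X 1 j, X 0 j] a

variable (X : Matrix (Fin 2) ι ℝ) (α : ι → ℝ)

theorem transpose_mul_scaledPerp_apply (i j : ι) :
    (Xᵀ * scaledPerp X α) i j = α j * (X 1 i * X 0 j - X 0 i * X 1 j) := by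
  simp [scaledPerp, Matrix.mul_apply, Fin.sum_univ_two]; ring

theorem scaledPerp_transpose_mul_apply (i j : ι) :
    ((scaledPerp X α)ᵀ * X) i j = -(α i * (X 1 i * X 0 j - X 0 i * X 1 j)) := by
  simp [scaledPerp, Matrix.mul_apply, Fin.sum_univ_two]; ring

theorem scaledPerp_transpose_mul_self_apply (i j : ι) :
    ((scaledPerp X α)ᵀ * scaledPerp X α) i j = α i * α j * (Xᵀ * X) i j := by
  simp [scaledPerp, Matrix.mul_apply, Fin.sum_univ_two]; ring

end Circle

/-- Test the Hessian with the tangent direction `scaledPerp X α`. -/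
theorem HessNegSemidef.sum_Mmat_mul_sub_sq_nonneg {ι : Type*} [Fintype ι] [DecidableEq ι]
    {W : Matrix ι ι ℝ} {X : Matrix (Fin 2) ι ℝ} {d1 d2 : ℝ → ℝ} (h : HessNegSemidef W X d1 d2)
    (hW : W.IsSymm) (hX : unitCols X) (α : ι → ℝ) :
    0 ≤ ∑ i, ∑ j, Mmat W X d1 d2 i j * (α i - α j) ^ 2 := by
  set c := Xᵀ * X
  set g : ι → ι → ℝ := fun i j => W i j * d1 (c i j) * c i j
  have e1 : frob ((scaledPerp X α)ᵀ * scaledPerp X α) (Smat W X d1)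
      = ∑ i, ∑ j, g i j * (α i ^ 2 - α i * α j) := by
    rw [Smat, frob_sub_right, frob_ddiag, frob, ← Finset.sum_sub_distrib]
    refine Finset.sum_congr rfl fun i _ => ?_
    rw [scaledPerp_transpose_mul_self_apply, hX.transpose_mul_self_apply_self, Matrix.mul_apply,
      Finset.mul_sum, ← Finset.sum_sub_distrib]
    refine Finset.sum_congr rfl fun k _ => ?_
    simp only [g, scaledPerp_transpose_mul_self_apply, Amat, Matrix.hadamard_apply,
      Matrix.map_apply, hW.apply k i, transpose_mul_self_apply_comm X k i]
    ring
  have e2 : frob ((Xᵀ * scaledPerp X α + (scaledPerp X α)ᵀ * X).map fun t => t ^ 2)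
        (Matrix.hadamard W (c.map d2))
      = ∑ i, ∑ j, W i j * d2 (c i j) * (1 - c i j ^ 2) * (α i - α j) ^ 2 := by
    refine Finset.sum_congr rfl fun i _ => Finset.sum_congr rfl fun j _ => ?_
    simp only [Matrix.map_apply, Matrix.add_apply, transpose_mul_scaledPerp_apply,
      scaledPerp_transpose_mul_apply, Matrix.hadamard_apply]
    linear_combination W i j * d2 (c i j) * (α i - α j) ^ 2 * hX.cross_sq i j
  have hM : ∑ i, ∑ j, Mmat W X d1 d2 i j * (α i - α j) ^ 2
      = ∑ i, ∑ j, g i j * (α i - α j) ^ 2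
        - ∑ i, ∑ j, W i j * d2 (c i j) * (1 - c i j ^ 2) * (α i - α j) ^ 2 := by
    simp only [← Finset.sum_sub_distrib]
    refine Finset.sum_congr rfl fun i _ => Finset.sum_congr rfl fun j _ => ?_
    simp only [Mmat, hfun, Matrix.of_apply, g]
    ring
  have hg := sum_sum_mul_sub_sq_of_symm g
    (fun i j => by simp only [g, c, hW.apply j i, transpose_mul_self_apply_comm X j i]) α
  have hH := h (scaledPerp X α) fun j => by rw [transpose_mul_scaledPerp_apply]; ring
  rw [e1, e2] at hH
  linarith

theorem pos_of_fromRel_adj {ι : Type*} {W : Matrix ι ι ℝ} (hW : W.IsSymm) {i j : ι}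
    (h : (SimpleGraph.fromRel fun i j => 0 < W i j).Adj i j) : 0 < W i j :=
  ((SimpleGraph.fromRel_adj _ _ _).1 h).2.elim id (hW.apply i j ▸ id)

theorem HessNegSemidef.connected_inf_fromRel_Mmat_nonneg {ι : Type*} [Fintype ι] [DecidableEq ι]
    {W : Matrix ι ι ℝ} {X : Matrix (Fin 2) ι ℝ} {d1 d2 : ℝ → ℝ} (h : HessNegSemidef W X d1 d2)
    (hW : W.IsSymm) (hW0 : ∀ i j, 0 ≤ W i j) (hconn : ConnectedW W) (hX : unitCols X) :
    ((SimpleGraph.fromRel fun i j => 0 < W i j) ⊓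
      SimpleGraph.fromRel fun i j => 0 ≤ Mmat W X d1 d2 i j).Connected := by
  refine SimpleGraph.Connected.inf_fromRel_nonneg hconn (Mmat_isSymm hW X d1 d2)
    (fun i j hij hadj => ?_) (h.sum_Mmat_mul_sub_sq_nonneg hW hX)
  have hWij : W i j = 0 := ((hW0 i j).eq_of_not_lt fun hpos =>
    hadj ((SimpleGraph.fromRel_adj _ _ _).2 ⟨hij, .inl hpos⟩)).symm
  simp [Mmat, hWij]

theorem abs_le_pi_div_of_hfun_cos_nonneg {n : ℕ} (hn : 1 < n) {d1 d2 : ℝ → ℝ}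
    (hcond : ∀ t : ℝ, -1 ≤ t → t < cos (π / n) → hfun d1 d2 t < 0) {t : ℝ}
    (ht : |t| ≤ 2 * π - 2 * π / (n + 1)) (h : 0 ≤ hfun d1 d2 (cos t)) :
    |t| ≤ π / n := by
  have hn' : (2 : ℝ) ≤ n := by exact_mod_cast hn
  have hgap : π / n < 2 * π / (n + 1) := by
    rw [div_lt_div_iff₀ (by positivity) (by positivity)]
    nlinarith [pi_pos]
  refine abs_le_of_cos_le_cos (by positivity) (by linarith) ?_
  by_contra! hlt
  exact (hcond _ (neg_one_le_cos t) hlt).not_ge h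

theorem abs_sub_lt_pi_of_connected {n : ℕ} (hn : 1 < n) {G : SimpleGraph (Fin n)}
    (hG : G.Connected) {θ : Fin n → ℝ} (hθ : ∀ p q, G.Adj p q → |θ p - θ q| ≤ π / n)
    (p q : Fin n) : |θ p - θ q| < π := by
  have hn0 : (0 : ℝ) < n := Nat.cast_pos.2 (by omega)
  calc |θ p - θ q| ≤ (Fintype.card (Fin n) - 1) * (π / n) :=
        (hG.preconnected p q).abs_sub_le (div_pos pi_pos hn0).le hθ
    _ = π - π / n := by rw [Fintype.card_fin, sub_mul, one_mul, mul_div_cancel₀ _ hn0.ne']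
    _ < π := by linarith [div_pos pi_pos hn0]

/-- At a vertex of maximal angle every term of the sum is `≤ 0`, so criticality forces
its neighbours to share that angle. -/
theorem eq_of_forall_sum_sin_mul_eq_zero {ι : Type*} [Fintype ι] {G : SimpleGraph ι}
    (hG : G.Connected) {θ : ι → ℝ} (hθ : ∀ i j, |θ i - θ j| < π) {A : Matrix ι ι ℝ}
    (hA : ∀ i j, 0 ≤ A i j) (hAG : ∀ i j, G.Adj i j → 0 < A j i)
    (hcrit : ∀ j, ∑ k, sin (θ k - θ j) * A k j = 0) (i j : ι) : θ i = θ j := by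
  obtain ⟨m, -, hm⟩ := exists_max_image univ θ (univ_nonempty_iff.2 hG.nonempty)
  have hsin : ∀ k p, θ k < θ p → sin (θ k - θ p) < 0 := fun k p hkp =>
    sin_neg_of_neg_of_neg_pi_lt (by linarith) (abs_lt.1 (hθ k p)).1
  have hmax : ∀ p, θ p = θ m := by
    refine hG.mem_of_forall_adj_mem (S := {p | θ p = θ m}) (fun p hp q hpq => ?_) rfl
    have hterm : ∀ k, sin (θ k - θ p) * A k p ≤ 0 := fun k => by
      rcases (hm k (mem_univ k)).lt_or_eq with hk | hk
      · exact mul_nonpos_of_nonpos_of_nonneg (hsin k p (hk.trans_eq hp.symm)).le (hA k p)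
      · simp [hk, show θ p = θ m from hp]
    have hq := (sum_eq_zero_iff_of_nonpos fun k _ => hterm k).1 (hcrit p) q (mem_univ q)
    by_contra hqm
    have hlt : θ q < θ p := ((hm q (mem_univ q)).lt_of_ne hqm).trans_eq hp.symm
    exact (mul_neg_of_neg_of_pos (hsin q p hlt) (hAG p q hpq)).ne hq
  exact (hmax i).trans (hmax j).symm

theorem synchronization_circle_large_beta_condition_general
    {n : ℕ}
    (W : Matrix (Fin n) (Fin n) ℝ) (hWsymm : W.IsSymm) (hWnonneg : ∀ i j, 0 ≤ W i j)
    (hconn : ConnectedW W)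
    (d1 d2 : ℝ → ℝ)
    (hd1pos : ∀ t ∈ Set.Icc (-1 : ℝ) 1, 0 < d1 t)
    (hcond : ∀ t : ℝ, -1 ≤ t → t < Real.cos (Real.pi / (n : ℝ)) →
      t * d1 t - (1 - t ^ 2) * d2 t < 0)
    (X : Matrix (Fin 2) (Fin n) ℝ) (hX : unitCols X)
    (hcrit : IsCritical W X d1) (hhess : HessNegSemidef W X d1 d2) :
    ∀ j j' : Fin n, ∀ i, X i j = X i j' := by
  rcases le_or_gt n 1 with hn | hn
  · have := Fin.subsingleton_iff_le_one.2 hn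
    intro j j' i
    rw [Subsingleton.elim j j']
  obtain ⟨θ, hθX, hθ⟩ := hX.exists_angles
  have hc : ∀ i j, (Xᵀ * X) i j = cos (θ i - θ j) := fun i j => by
    simp [transpose_mul_self_apply_fin_two, hθX, cos_sub]
  have hH := hhess.connected_inf_fromRel_Mmat_nonneg hWsymm hWnonneg hconn hX
  have hspan := abs_sub_lt_pi_of_connected hn hH fun p q ⟨hpq, _, hM⟩ => by
    simp only [(Mmat_isSymm hWsymm X d1 d2).apply p q, or_self] at hM
    refine abs_le_pi_div_of_hfun_cos_nonneg hn hcond (by simpa using hθ p q) ?_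
    rw [← hc]
    exact nonneg_of_mul_nonneg_right hM (pos_of_fromRel_adj hWsymm hpq)
  have hd1 : ∀ i j, 0 < d1 ((Xᵀ * X) i j) := fun i j =>
    hd1pos _ (by rw [hc]; exact ⟨neg_one_le_cos _, cos_le_one _⟩)
  have hθeq := eq_of_forall_sum_sin_mul_eq_zero hconn hspan (A := Amat W X d1)
    (fun i j => mul_nonneg (hWnonneg i j) (hd1 i j).le)
    (fun i j hij => mul_pos (pos_of_fromRel_adj hWsymm hij.symm) (hd1 j i))
    (hcrit.sum_sin_mul_Amat_eq_zero hθX)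
  intro j j' i
  fin_cases i <;> simp [(hθX _).1, (hθX _).2, hθeq j j']

/-- Theorem 4, main part: on the circle, if `φ' > 0` and
`tφ'(t) − (1−t²)φ''(t) < 0` for all `t ∈ [−1, cos(π/n))`, and the graph is connected,
then second-order critical points are synchronized. -/
theorem synchronization_circle_large_beta_condition
    {n : ℕ} (hn : 1 ≤ n)
    (W : Matrix (Fin n) (Fin n) ℝ) (hWsymm : W.IsSymm) (hWnonneg : ∀ i j, 0 ≤ W i j)
    (hconn : ConnectedW W)
    (φ d1 d2 : ℝ → ℝ)
    (hder1 : ∀ t ∈ Set.Icc (-1 : ℝ) 1, HasDerivAt φ (d1 t) t)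
    (hder2 : ∀ t ∈ Set.Icc (-1 : ℝ) 1, HasDerivAt d1 (d2 t) t)
    (hd2cont : ContinuousOn d2 (Set.Icc (-1 : ℝ) 1))
    (hd1pos : ∀ t ∈ Set.Icc (-1 : ℝ) 1, 0 < d1 t)
    (hcond : ∀ t : ℝ, -1 ≤ t → t < Real.cos (Real.pi / (n : ℝ)) →
      t * d1 t - (1 - t ^ 2) * d2 t < 0)
    (X : Matrix (Fin 2) (Fin n) ℝ) (hX : unitCols X)
    (hcrit : IsCritical W X d1) (hhess : HessNegSemidef W X d1 d2) :
    ∀ j j' : Fin n, ∀ i, X i j = X i j' :=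
  synchronization_circle_large_beta_condition_general W hWsymm hWnonneg hconn d1 d2 hd1pos hcond X
    hX hcrit hhess
end
end

section
/- Let n ≥ 2 and let φ : [−1,1] → ℝ be twice continuously differentiable with φ''(t) ≥ (n²/π²)·φ'(t) > 0 for all t ∈ [−1,1]. Then tφ'(t) − (1−t²)φ''(t) < 0 for all t ∈ [−1, cos(π/n)). -/
open Matrix

noncomputable section

lemma key_trig {x : ℝ} (hx : 0 < x) (hx2 : x ≤ Real.pi / 2) :
    x ^ 2 * Real.cos x ≤ Real.sin x ^ 2 := by
  have hu : 0 < x / 2 := by linarith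
  have hu2 : x / 2 < Real.pi / 2 := by
    have := Real.pi_pos; linarith
  have htan := Real.lt_tan hu hu2
  have hcos : 0 < Real.cos (x / 2) := Real.cos_pos_of_mem_Ioo ⟨by linarith, hu2⟩
  rw [Real.tan_eq_sin_div_cos, lt_div_iff₀ hcos] at htan
  have hsx : Real.sin x = 2 * Real.sin (x / 2) * Real.cos (x / 2) := by
    rw [← Real.sin_two_mul]; ring_nf
  have hcx : Real.cos x = 2 * Real.cos (x / 2) ^ 2 - 1 := by
    rw [← Real.cos_two_mul]; ring_nf
  have h1 : (x / 2) ^ 2 * Real.cos (x / 2) ^ 2 ≤ Real.sin (x / 2) ^ 2 := by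
    nlinarith [mul_pos hu hcos]
  have h1' : (x / 2) ^ 2 * Real.cos (x / 2) ^ 2 * Real.cos (x / 2) ^ 2
      ≤ Real.sin (x / 2) ^ 2 * Real.cos (x / 2) ^ 2 :=
    mul_le_mul_of_nonneg_right h1 (sq_nonneg _)
  have h2 : (x / 2) ^ 2 * (2 * Real.cos (x / 2) ^ 2 - 1)
      ≤ (x / 2) ^ 2 * (Real.cos (x / 2) ^ 2) ^ 2 := by
    nlinarith [sq_nonneg (Real.cos (x / 2) ^ 2 - 1), sq_nonneg (x / 2)]
  rw [hsx, hcx]; nlinarith [h1', h2]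

/-- if `φ'' ≥ (n²/π²)·φ' > 0` on `[−1,1]` (with `n ≥ 2`), then
`tφ'(t) − (1−t²)φ''(t) < 0` for all `t ∈ [−1, cos(π/n))`. -/
theorem hfun_negative_of_strong_convexity
    (n : ℕ) (hn : 2 ≤ n)
    (φ d1 d2 : ℝ → ℝ)
    (hder1 : ∀ t ∈ Set.Icc (-1 : ℝ) 1, HasDerivAt φ (d1 t) t)
    (hder2 : ∀ t ∈ Set.Icc (-1 : ℝ) 1, HasDerivAt d1 (d2 t) t)
    (hd2cont : ContinuousOn d2 (Set.Icc (-1 : ℝ) 1))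
    (hd1pos : ∀ t ∈ Set.Icc (-1 : ℝ) 1, 0 < d1 t)
    (hstrong : ∀ t ∈ Set.Icc (-1 : ℝ) 1, ((n : ℝ) ^ 2 / Real.pi ^ 2) * d1 t ≤ d2 t) :
    ∀ t : ℝ, -1 ≤ t → t < Real.cos (Real.pi / (n : ℝ)) →
      t * d1 t - (1 - t ^ 2) * d2 t < 0 := by
  
  intro t ht1 ht2
  have hpi := Real.pi_pos
  have hn2 : (2 : ℝ) ≤ (n : ℝ) := by exact_mod_cast hn
  have hnpos : (0 : ℝ) < n := by linarith
  have hs : 0 < Real.pi / n := by positivity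
  have hs2 : Real.pi / n ≤ Real.pi / 2 :=
    div_le_div_of_nonneg_left (le_of_lt hpi) (by norm_num) hn2
  have hc1 : Real.cos (Real.pi / (n : ℝ)) < 1 := by
    have := Real.cos_lt_cos_of_nonneg_of_le_pi (le_refl 0) (by linarith) hs
    simpa using this
  have ht1' : t ≤ 1 := le_of_lt (lt_of_lt_of_le ht2 (le_of_lt hc1))
  have htmem : t ∈ Set.Icc (-1 : ℝ) 1 := ⟨ht1, ht1'⟩
  have hK : (0 : ℝ) < (n : ℝ) ^ 2 / Real.pi ^ 2 := by positivity
  have hd1 := hd1pos t htmem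
  have hd2 : 0 < d2 t := lt_of_lt_of_le (by positivity) (hstrong t htmem)
  rcases le_or_gt t 0 with hneg | hpos
  · have h1t2 : 0 ≤ 1 - t ^ 2 := by nlinarith
    rcases lt_or_eq_of_le hneg with h | h
    · nlinarith [mul_nonneg h1t2 (le_of_lt hd2), mul_pos (neg_pos.mpr h) hd1]
    · subst h; simp only [zero_mul, ne_eq]; nlinarith
  · -- 0 < t
    have hkey := key_trig hs (by linarith)
    have hcc : Real.sin (Real.pi / n) ^ 2 = 1 - Real.cos (Real.pi / (n : ℝ)) ^ 2 := by
      have := Real.sin_sq_add_cos_sq (Real.pi / n); linarith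
    have hn2pos : (0 : ℝ) < (n : ℝ) ^ 2 := by positivity
    have hmain : Real.pi ^ 2 * Real.cos (Real.pi / (n : ℝ))
        ≤ (n : ℝ) ^ 2 * (1 - Real.cos (Real.pi / (n : ℝ)) ^ 2) := by
      have h : Real.pi ^ 2 / (n : ℝ) ^ 2 * Real.cos (Real.pi / n)
          ≤ Real.sin (Real.pi / n) ^ 2 := by
        have e : (Real.pi / n) ^ 2 = Real.pi ^ 2 / (n : ℝ) ^ 2 := by ring
        rw [← e]; exact hkey
      rw [div_mul_eq_mul_div, div_le_iff₀ hn2pos] at h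
      rw [hcc] at h; linarith
    have e2 : t ^ 2 < Real.cos (Real.pi / (n : ℝ)) ^ 2 := by nlinarith
    have htlt : Real.pi ^ 2 * t < (n : ℝ) ^ 2 * (1 - t ^ 2) := by
      have e1 : Real.pi ^ 2 * t < Real.pi ^ 2 * Real.cos (Real.pi / (n : ℝ)) :=
        mul_lt_mul_of_pos_left ht2 (by positivity)
      nlinarith
    have h1t2 : 0 < 1 - t ^ 2 := by nlinarith
    have hKt : t < (1 - t ^ 2) * ((n : ℝ) ^ 2 / Real.pi ^ 2) := by
      rw [mul_div_assoc', lt_div_iff₀ (by positivity)]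
      linarith [htlt]
    have step1 : t * d1 t < (1 - t ^ 2) * ((n : ℝ) ^ 2 / Real.pi ^ 2) * d1 t :=
      mul_lt_mul_of_pos_right hKt hd1
    have step2 : (1 - t ^ 2) * (((n : ℝ) ^ 2 / Real.pi ^ 2) * d1 t)
        ≤ (1 - t ^ 2) * d2 t :=
      mul_le_mul_of_nonneg_left (hstrong t htmem) (le_of_lt h1t2)
    rw [mul_assoc] at step1
    linarith
end
end

section
/- Fix d ≥ 2 and n ≥ 1, let φ(t) = t²/2, and let W = 1_n 1_nᵀ (complete graph with unit weights). If X ∈ ℝ^{d×n} with unit-norm columns is critical for f and has negative-semidefinite Hessian, then the columns of X are all equal up to sign: x_i = ±x_j for all i, j (equivalently rank(X) = 1), and X is a global maximum of f over matrices with unit-norm columns. -/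
open Matrix

noncomputable section

/-!
With `φ(t) = t²/2` on the complete graph, `S = ddiag(G²) - G` for the Gram matrix `G = XᵀX`,
and criticality says that every column `x_j` is an eigenvector of `XXᵀ` with eigenvalue
`λ_j = (G²)_jj`. Moving only column `j` in a direction `w ⊥ x_j`, negative semidefiniteness of
the Hessian reads `‖Xᵀw‖² ≤ (λ_j - 1)‖w‖²`. For `w = x_k - t x_j`, `t = ⟨x_j, x_k⟩`, this is
`(1 - t²) λ_k ≤ (1 - t²)(λ_j - 1)`; adding the same inequality with `j` and `k` swapped gives
`2(1 - t²) ≤ 0`, so `t² = 1` and `x_k = ±x_j`. Every entry of `G` then has the largest square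
allowed by Cauchy–Schwarz, which makes `X` a global maximiser of `f = ¼ ∑ G_pq²`.
-/

section UnitVectors

variable {n : Type*} [Fintype n] {u v : n → ℝ}

lemma dotProduct_self_sub_dotProduct_smul (hu : u ⬝ᵥ u = 1) (hv : v ⬝ᵥ v = 1) :
    (v - (u ⬝ᵥ v) • u) ⬝ᵥ (v - (u ⬝ᵥ v) • u) = 1 - (u ⬝ᵥ v) ^ 2 := by
  simp only [dotProduct_sub, sub_dotProduct, dotProduct_smul, smul_dotProduct, hu, hv,
    dotProduct_comm v u, smul_eq_mul]
  ring

lemma sq_dotProduct_le_one (hu : u ⬝ᵥ u = 1) (hv : v ⬝ᵥ v = 1) : (u ⬝ᵥ v) ^ 2 ≤ 1 := by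
  have := dotProduct_self_star_nonneg (v - (u ⬝ᵥ v) • u)
  rw [star_trivial, dotProduct_self_sub_dotProduct_smul hu hv] at this
  linarith

lemma eq_dotProduct_smul_of_sq_dotProduct_eq_one (hu : u ⬝ᵥ u = 1) (hv : v ⬝ᵥ v = 1)
    (h : (u ⬝ᵥ v) ^ 2 = 1) : v = (u ⬝ᵥ v) • u := by
  rw [← sub_eq_zero, ← dotProduct_self_eq_zero, dotProduct_self_sub_dotProduct_smul hu hv, h,
    sub_self]

end UnitVectors

lemma Matrix.dotProduct_transpose_mulVec_self {m n : Type*} [Fintype m] [Fintype n]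
    (A : Matrix m n ℝ) (w : m → ℝ) : (Aᵀ *ᵥ w) ⬝ᵥ (Aᵀ *ᵥ w) = w ⬝ᵥ (A * Aᵀ) *ᵥ w := by
  rw [← mulVec_mulVec, dotProduct_mulVec, vecMul_transpose, dotProduct_comm]

theorem Matrix.rank_eq_one_of_cols_eq_smul {K m n : Type*} [Field K] [Fintype m] [Fintype n]
    (A : Matrix m n K) {j : n} (hj : Aᵀ j ≠ 0) (c : n → K) (h : ∀ k, Aᵀ k = c k • Aᵀ j) :
    A.rank = 1 := by
  have hA : A = vecMulVec (Aᵀ j) c := by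
    ext i k
    simpa [vecMulVec_apply, mul_comm] using congr_fun (h k) i
  refine le_antisymm (hA ▸ rank_vecMulVec_le _ _) (Nat.one_le_iff_ne_zero.mpr ?_)
  rw [rank_eq_finrank_span_cols, Ne, Submodule.finrank_eq_zero, Submodule.span_eq_bot]
  exact fun hcols => hj (hcols _ ⟨j, rfl⟩)

lemma deriv_half_sq : deriv (fun t : ℝ => t ^ 2 / 2) = id := by
  ext t; simp [deriv_div_const]

lemma deriv_deriv_half_sq : deriv (deriv fun t : ℝ => t ^ 2 / 2) = fun _ => 1 := by
  rw [deriv_half_sq]; ext t; simp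

section CompleteGraphQuadratic

variable {ι : Type*} [Fintype ι] {d : ℕ} {X : Matrix (Fin d) ι ℝ}

lemma unitCols_iff_dotProduct : unitCols X ↔ ∀ j, Xᵀ j ⬝ᵥ Xᵀ j = 1 := by
  simp [unitCols, dotProduct, sq]

lemma fval_ones_half_sq (Y : Matrix (Fin d) ι ℝ) :
    fval (of fun _ _ => 1) (fun t => t ^ 2 / 2) Y = (∑ p, ∑ q, (Yᵀ p ⬝ᵥ Yᵀ q) ^ 2) / 4 := by
  have hgram : ∀ p q, (Yᵀ * Y) p q = Yᵀ p ⬝ᵥ Yᵀ q := fun _ _ => rfl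
  simp only [fval, frob, of_apply, map_apply, one_mul, hgram, ← Finset.sum_div]
  ring

variable [DecidableEq ι]

lemma Smat_ones_id : Smat (of fun _ _ => 1) X id = ddiag (Xᵀ * X * (Xᵀ * X)) - Xᵀ * X := by
  have hA : Amat (of fun _ _ => 1) X id = Xᵀ * X := by ext; simp [Amat, hadamard]
  rw [Smat, hA]

lemma IsCritical.mul_transpose_mulVec_col (hX : IsCritical (of fun _ _ => 1) X id) (j : ι) :
    (X * Xᵀ) *ᵥ Xᵀ j = (Xᵀ * X * (Xᵀ * X)) j j • Xᵀ j := by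
  have h : X * ddiag (Xᵀ * X * (Xᵀ * X)) = X * Xᵀ * X := by
    rw [IsCritical, Smat_ones_id, Matrix.mul_sub, sub_eq_zero] at hX
    rw [hX, Matrix.mul_assoc]
  ext i
  have hij := congr_fun (congr_fun h i) j
  simp only [ddiag, mul_diagonal] at hij
  rw [Pi.smul_apply, smul_eq_mul, mul_comm, transpose_apply, hij]
  rfl

lemma HessNegSemidef.dotProduct_transpose_mulVec_le
    (hX : HessNegSemidef (of fun _ _ => 1) X id fun _ => 1)
    {j : ι} {w : Fin d → ℝ} (hw : Xᵀ j ⬝ᵥ w = 0) :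
    (Xᵀ *ᵥ w) ⬝ᵥ (Xᵀ *ᵥ w) ≤ (w ⬝ᵥ w) * Smat (of fun _ _ => 1) X id j j := by
  set e : ι → ℝ := Pi.single j 1
  set y := Xᵀ *ᵥ w
  have hXV : Xᵀ * vecMulVec w e = vecMulVec y e := mul_vecMulVec _ _ _
  have hyj : y j = 0 := hw
  have hQ := hX (vecMulVec w e) fun q => by
    rw [hXV, vecMulVec_apply]
    by_cases hq : q = j
    · subst hq; simp [hyj]
    · simp [e, hq]
  have hVV : frob ((vecMulVec w e)ᵀ * vecMulVec w e) (Smat (of fun _ _ => 1) X id)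
      = (w ⬝ᵥ w) * Smat (of fun _ _ => 1) X id j j := by
    simp [frob, transpose_vecMulVec, vecMulVec_mul_vecMulVec, e, vecMulVec_apply, Pi.single_apply]
  have hXVVX : frob ((Xᵀ * vecMulVec w e + (vecMulVec w e)ᵀ * X).map fun t => t ^ 2)
      (hadamard (of fun _ _ => 1) ((Xᵀ * X).map fun _ => 1)) = 2 * (y ⬝ᵥ y) := by
    rw [← transpose_transpose X, ← transpose_mul, transpose_transpose, hXV]
    simp [frob, hadamard, e, vecMulVec_apply, Pi.single_apply, add_sq]
    simp [Finset.sum_add_distrib, Finset.sum_ite_irrel, hyj, dotProduct, sq]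
    ring
  linarith

lemma one_sub_sq_mul_le (hu : ∀ j, Xᵀ j ⬝ᵥ Xᵀ j = 1)
    (hc : IsCritical (of fun _ _ => 1) X id) (hh : HessNegSemidef (of fun _ _ => 1) X id fun _ => 1)
    (j k : ι) :
    (1 - (Xᵀ j ⬝ᵥ Xᵀ k) ^ 2) * (Xᵀ * X * (Xᵀ * X)) k k ≤
      (1 - (Xᵀ j ⬝ᵥ Xᵀ k) ^ 2) * ((Xᵀ * X * (Xᵀ * X)) j j - 1) := by
  set t := Xᵀ j ⬝ᵥ Xᵀ k
  set w := Xᵀ k - t • Xᵀ j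
  have htk : Xᵀ k ⬝ᵥ Xᵀ j = t := dotProduct_comm _ _
  have hw : Xᵀ j ⬝ᵥ w = 0 := by simp [w, dotProduct_sub, hu j, t]
  have hXw : (Xᵀ *ᵥ w) ⬝ᵥ (Xᵀ *ᵥ w) = (1 - t ^ 2) * (Xᵀ * X * (Xᵀ * X)) k k := by
    rw [dotProduct_transpose_mulVec_self, mulVec_sub, mulVec_smul,
      hc.mul_transpose_mulVec_col, hc.mul_transpose_mulVec_col]
    simp only [w, dotProduct_sub, sub_dotProduct, dotProduct_smul, smul_dotProduct, hu, htk,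
      smul_eq_mul]
    ring
  have hS : Smat (of fun _ _ => 1) X id j j = (Xᵀ * X * (Xᵀ * X)) j j - 1 := by
    have hG : (Xᵀ * X) j j = 1 := hu j
    simp [Smat_ones_id, ddiag, hG]
  rw [← hXw, ← dotProduct_self_sub_dotProduct_smul (hu j) (hu k), ← hS]
  exact hh.dotProduct_transpose_mulVec_le hw

lemma sq_dotProduct_col_eq_one (hu : ∀ j, Xᵀ j ⬝ᵥ Xᵀ j = 1)
    (hc : IsCritical (of fun _ _ => 1) X id) (hh : HessNegSemidef (of fun _ _ => 1) X id fun _ => 1)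
    (j k : ι) : (Xᵀ j ⬝ᵥ Xᵀ k) ^ 2 = 1 := by
  have hjk := one_sub_sq_mul_le hu hc hh j k
  have hkj := one_sub_sq_mul_le hu hc hh k j
  rw [dotProduct_comm] at hkj
  have := sq_dotProduct_le_one (hu j) (hu k)
  linarith

end CompleteGraphQuadratic

theorem quadratic_case_benign_general
    {d n : ℕ} (hn : 1 ≤ n)
    (X : Matrix (Fin d) (Fin n) ℝ) (hX : unitCols X)
    (hcrit : IsCritical (Matrix.of fun _ _ => (1 : ℝ)) X (deriv fun t => t ^ 2 / 2))
    (hhess : HessNegSemidef (Matrix.of fun _ _ => (1 : ℝ)) X (deriv fun t => t ^ 2 / 2)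
      (deriv (deriv fun t => t ^ 2 / 2))) :
    (∀ j j' : Fin n, (∀ i, X i j = X i j') ∨ (∀ i, X i j = -X i j')) ∧
    X.rank = 1 ∧
    (∀ Y : Matrix (Fin d) (Fin n) ℝ, unitCols Y →
      fval (Matrix.of fun _ _ => (1 : ℝ)) (fun t => t ^ 2 / 2) Y ≤
        fval (Matrix.of fun _ _ => (1 : ℝ)) (fun t => t ^ 2 / 2) X) := by
  rw [deriv_deriv_half_sq, deriv_half_sq] at hhess
  rw [deriv_half_sq] at hcrit
  rw [unitCols_iff_dotProduct] at hX
  have hsq := sq_dotProduct_col_eq_one hX hcrit hhess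
  have hpar : ∀ j k, Xᵀ k = (Xᵀ j ⬝ᵥ Xᵀ k) • Xᵀ j := fun j k =>
    eq_dotProduct_smul_of_sq_dotProduct_eq_one (hX j) (hX k) (hsq j k)
  refine ⟨fun j j' => ?_, ?_, fun Y hY => ?_⟩
  · rcases sq_eq_one_iff.mp (hsq j' j) with h | h
    · exact Or.inl fun i => by simpa [h] using congr_fun (hpar j' j) i
    · exact Or.inr fun i => by simpa [h] using congr_fun (hpar j' j) i
  · have j₀ : Fin n := ⟨0, hn⟩
    refine rank_eq_one_of_cols_eq_smul X (j := j₀) (fun h0 => ?_) _ (hpar j₀)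
    simpa [h0] using hX j₀
  · rw [unitCols_iff_dotProduct] at hY
    rw [fval_ones_half_sq, fval_ones_half_sq]
    refine div_le_div_of_nonneg_right
      (Finset.sum_le_sum fun p _ => Finset.sum_le_sum fun q _ => ?_) zero_le_four
    rw [hsq]
    exact sq_dotProduct_le_one (hY p) (hY q)

/-- Theorem 5, quadratic case: for `φ(t) = t²/2` and the complete unit-weight
graph, second-order critical points have all columns equal up to sign (rank one) and are
global maxima. -/
theorem quadratic_case_benign
    {d n : ℕ} (hd : 2 ≤ d) (hn : 1 ≤ n)
    (X : Matrix (Fin d) (Fin n) ℝ) (hX : unitCols X)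
    (hcrit : IsCritical (Matrix.of fun _ _ => (1 : ℝ)) X (deriv fun t => t ^ 2 / 2))
    (hhess : HessNegSemidef (Matrix.of fun _ _ => (1 : ℝ)) X (deriv fun t => t ^ 2 / 2)
      (deriv (deriv fun t => t ^ 2 / 2))) :
    (∀ j j' : Fin n, (∀ i, X i j = X i j') ∨ (∀ i, X i j = -X i j')) ∧
    X.rank = 1 ∧
    (∀ Y : Matrix (Fin d) (Fin n) ℝ, unitCols Y →
      fval (Matrix.of fun _ _ => (1 : ℝ)) (fun t => t ^ 2 / 2) Y ≤
        fval (Matrix.of fun _ _ => (1 : ℝ)) (fun t => t ^ 2 / 2) X) :=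
  quadratic_case_benign_general hn X hX hcrit hhess
end
end

section
/- Let d = 2, let J = [[0,−1],[1,0]] (rotation by π/2), and let X ∈ ℝ^{2×n} have unit-norm columns. Every Ẋ ∈ ℝ^{2×n} with diag(XᵀẊ) = 0 has the form Ẋ = J X diag(α) for some α ∈ ℝⁿ, and for all α ∈ ℝⁿ the Hessian quadratic form satisfies −⟨ẊᵀẊ, S⟩ + (1/2)⟨(XᵀẊ + ẊᵀX)^{⊙2}, W ⊙ φ''(XᵀX)⟩ = −αᵀL(M)α, where m_ij = w_ij·(x_iᵀx_j·φ'(x_iᵀx_j) − (1−(x_iᵀx_j)²)·φ''(x_iᵀx_j)) and L(M) = diag(M1) − M. Consequently, the eigenvalues of the Riemannian Hessian of f at X equal those of −L(M). -/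
open Matrix

noncomputable section

/-! Write `G = XᵀX`, `K = XᵀJX` and `Ẋ = JX diag(α)`. Since `J` is orthogonal,
`ẊᵀẊ = diag(α) G diag(α)`, and since it is skew, `XᵀẊ + ẊᵀX = K diag(α) − diag(α) K` has entries
`k_ij (α_j − α_i)`. As `G` has unit diagonal, the first term of the form is `−αᵀ L(G ⊙ A) α`.
In the plane `k_ij² = 1 − g_ij²` (Lagrange's identity), so the second term is `αᵀ L(Q) α` with
`q_ij = w_ij (1 − g_ij²) φ''(g_ij)`; and `M = G ⊙ A − Q`. -/

section Laplacian

variable {ι : Type*} [Fintype ι] [DecidableEq ι]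

lemma lap_sub (M N : Matrix ι ι ℝ) : lap (M - N) = lap M - lap N := by
  ext i j
  simp only [lap, Matrix.sub_apply, diagonal_apply, Finset.sum_sub_distrib]
  split_ifs <;> ring

lemma dotProduct_lap_mulVec (M : Matrix ι ι ℝ) (α : ι → ℝ) :
    α ⬝ᵥ lap M *ᵥ α = ∑ i, ∑ j, M i j * (α i ^ 2 - α i * α j) := by
  have hdiag : diagonal (fun i => ∑ j, M i j) *ᵥ α = fun i => (∑ j, M i j) * α i := by
    ext i; exact mulVec_diagonal _ _ _
  rw [lap, sub_mulVec, dotProduct_sub, hdiag]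
  simp only [dotProduct, mulVec, Finset.sum_mul, Finset.mul_sum, ← Finset.sum_sub_distrib]
  refine Finset.sum_congr rfl fun i _ => Finset.sum_congr rfl fun j _ => by ring

lemma dotProduct_lap_mulVec_of_isSymm {M : Matrix ι ι ℝ} (hM : M.IsSymm) (α : ι → ℝ) :
    α ⬝ᵥ lap M *ᵥ α = (1 / 2) * ∑ i, ∑ j, M i j * (α i - α j) ^ 2 := by
  have hswap : ∑ i, ∑ j, M i j * α j ^ 2 = ∑ i, ∑ j, M i j * α i ^ 2 := by
    rw [Finset.sum_comm]
    simp_rw [hM.apply]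
  have hexpand : ∑ i, ∑ j, M i j * (α i - α j) ^ 2
      = 2 * ∑ i, ∑ j, M i j * (α i ^ 2 - α i * α j)
        + (∑ i, ∑ j, M i j * α j ^ 2 - ∑ i, ∑ j, M i j * α i ^ 2) := by
    simp only [Finset.mul_sum, ← Finset.sum_sub_distrib, ← Finset.sum_add_distrib]
    refine Finset.sum_congr rfl fun i _ => Finset.sum_congr rfl fun j _ => by ring
  rw [dotProduct_lap_mulVec, hexpand, hswap]
  ring

end Laplacian

section Frobenius

variable {ι : Type*} [Fintype ι] [DecidableEq ι]

lemma frob_diagonal_mul_mul_diagonal (α : ι → ℝ) (G B : Matrix ι ι ℝ) :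
    frob (diagonal α * G * diagonal α) B = ∑ i, ∑ j, α i * α j * G i j * B i j := by
  simp only [frob, mul_diagonal, diagonal_mul]
  refine Finset.sum_congr rfl fun i _ => Finset.sum_congr rfl fun j _ => by ring

lemma frob_diagonal_mul_mul_diagonal_ddiag_sub (α : ι → ℝ) {G A : Matrix ι ι ℝ}
    (hG : ∀ i, G i i = 1) (hA : A.IsSymm) :
    frob (diagonal α * G * diagonal α) (ddiag (G * A) - A) = α ⬝ᵥ lap (G ⊙ A) *ᵥ α := by
  have hdiag : ∀ i,
      ∑ j, α i * α j * G i j * ddiag (G * A) i j = ∑ j, α i ^ 2 * (G i j * A i j) := by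
    intro i
    simp only [ddiag, diagonal_apply, mul_ite, mul_zero, Finset.sum_ite_eq, Finset.mem_univ,
      if_true, hG, mul_apply, Finset.mul_sum, hA.apply]
    refine Finset.sum_congr rfl fun j _ => by ring
  rw [frob_diagonal_mul_mul_diagonal, dotProduct_lap_mulVec]
  simp only [Matrix.sub_apply, mul_sub, Finset.sum_sub_distrib, hdiag, hadamard_apply]
  simp only [← Finset.sum_sub_distrib]
  refine Finset.sum_congr rfl fun i _ => Finset.sum_congr rfl fun j _ => by ring

end Frobenius

section Tangent

variable {d : ℕ} {ι : Type*} [Fintype ι] [DecidableEq ι]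
  (J : Matrix (Fin d) (Fin d) ℝ) (X : Matrix (Fin d) ι ℝ) (α : ι → ℝ)

lemma gram_mul_diagonal_of_orthogonal (hJ : Jᵀ * J = 1) :
    (J * X * diagonal α)ᵀ * (J * X * diagonal α) = diagonal α * (Xᵀ * X) * diagonal α := by
  simp only [transpose_mul, diagonal_transpose, Matrix.mul_assoc]
  rw [← Matrix.mul_assoc Jᵀ, hJ, Matrix.one_mul]

lemma transpose_mul_add_transpose_mul_apply_of_skew (hJ : Jᵀ = -J) (i j : ι) :
    (Xᵀ * (J * X * diagonal α) + (J * X * diagonal α)ᵀ * X) i j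
      = (Xᵀ * J * X) i j * (α j - α i) := by
  have hK : Xᵀ * (J * X * diagonal α) + (J * X * diagonal α)ᵀ * X
      = Xᵀ * J * X * diagonal α - diagonal α * (Xᵀ * J * X) := by
    simp only [transpose_mul, diagonal_transpose, hJ, Matrix.mul_assoc, Matrix.neg_mul,
      Matrix.mul_neg]
    abel
  rw [hK, Matrix.sub_apply, mul_diagonal, diagonal_mul]
  ring

end Tangent

section Circle

variable {ι : Type*} [Fintype ι] {X : Matrix (Fin 2) ι ℝ}

lemma rot_transpose : (!![(0 : ℝ), -1; 1, 0])ᵀ = -!![(0 : ℝ), -1; 1, 0] := by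
  ext i j; fin_cases i <;> fin_cases j <;> simp

lemma rot_transpose_mul_rot : (!![(0 : ℝ), -1; 1, 0])ᵀ * !![(0 : ℝ), -1; 1, 0] = 1 := by
  rw [rot_transpose, Matrix.neg_mul, mul_fin_two, one_fin_two]
  norm_num

lemma unitCols_fin_two (hX : unitCols X) (j : ι) : X 0 j ^ 2 + X 1 j ^ 2 = 1 := by
  simpa [Fin.sum_univ_two] using hX j

lemma gram_apply_self (hX : unitCols X) (i : ι) : (Xᵀ * X) i i = 1 := by
  simpa [mul_apply, Fin.sum_univ_two, sq] using unitCols_fin_two hX i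

lemma sq_rot_gram_apply (hX : unitCols X) (i j : ι) :
    ((Xᵀ * !![(0 : ℝ), -1; 1, 0] * X) i j) ^ 2 = 1 - ((Xᵀ * X) i j) ^ 2 := by
  simp only [mul_apply, transpose_apply, of_apply, cons_val', cons_val_fin_one, Fin.sum_univ_two,
    Fin.isValue, cons_val_zero, cons_val_one, mul_zero, mul_one, zero_add, mul_neg, add_zero,
    neg_mul]
  linear_combination (X 0 j ^ 2 + X 1 j ^ 2) * unitCols_fin_two hX i + unitCols_fin_two hX j

lemma exists_eq_rot_mul_diagonal [DecidableEq ι] (hX : unitCols X) {V : Matrix (Fin 2) ι ℝ}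
    (hV : ∀ j, (Xᵀ * V) j j = 0) : ∃ α : ι → ℝ, V = !![(0 : ℝ), -1; 1, 0] * X * diagonal α := by
  refine ⟨fun j => X 0 j * V 1 j - X 1 j * V 0 j, ?_⟩
  ext i j
  have hunit := unitCols_fin_two hX j
  have horth : X 0 j * V 0 j + X 1 j * V 1 j = 0 := by
    simpa [mul_apply, Fin.sum_univ_two] using hV j
  rw [mul_diagonal, mul_apply, Fin.sum_univ_two]
  fin_cases i <;> simp only [Fin.zero_eta, Fin.mk_one, Fin.isValue, of_apply, cons_val',
    cons_val_zero, cons_val_one, cons_val_fin_one, zero_mul, one_mul, neg_mul, zero_add, add_zero]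
  · linear_combination (-V 0 j) * hunit + X 0 j * horth
  · linear_combination (-V 1 j) * hunit + X 1 j * horth

end Circle

section Hessian

variable {d : ℕ} {ι : Type*}

lemma isSymm_gram (X : Matrix (Fin d) ι ℝ) : (Xᵀ * X).IsSymm := by
  rw [IsSymm, transpose_mul, transpose_transpose]

def Qmat (W : Matrix ι ι ℝ) (X : Matrix (Fin d) ι ℝ) (d2 : ℝ → ℝ) : Matrix ι ι ℝ :=
  of fun i j => W i j * ((1 - (Xᵀ * X) i j ^ 2) * d2 ((Xᵀ * X) i j))

lemma isSymm_Amat [Fintype ι] {W : Matrix ι ι ℝ} (hW : W.IsSymm) (X : Matrix (Fin d) ι ℝ)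
    (d1 : ℝ → ℝ) : (Amat W X d1).IsSymm :=
  IsSymm.ext fun i j => by
    simp only [Amat, hadamard_apply, map_apply, hW.apply, (isSymm_gram X).apply]

lemma isSymm_Qmat {W : Matrix ι ι ℝ} (hW : W.IsSymm) (X : Matrix (Fin d) ι ℝ)
    (d2 : ℝ → ℝ) : (Qmat W X d2).IsSymm :=
  IsSymm.ext fun i j => by simp only [Qmat, of_apply, hW.apply, (isSymm_gram X).apply]

lemma Mmat_eq_hadamard_sub_Qmat [Fintype ι] (W : Matrix ι ι ℝ) (X : Matrix (Fin d) ι ℝ)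
    (d1 d2 : ℝ → ℝ) : Mmat W X d1 d2 = (Xᵀ * X) ⊙ Amat W X d1 - Qmat W X d2 := by
  ext i j
  simp only [Mmat, Qmat, Amat, hfun, of_apply, Matrix.sub_apply, hadamard_apply, map_apply]
  ring

lemma frob_sq_rot_tangent [Fintype ι] [DecidableEq ι] {W : Matrix ι ι ℝ} (hW : W.IsSymm)
    {X : Matrix (Fin 2) ι ℝ} (hX : unitCols X) (d2 : ℝ → ℝ) (α : ι → ℝ) :
    frob ((Xᵀ * (!![(0 : ℝ), -1; 1, 0] * X * diagonal α)
        + (!![(0 : ℝ), -1; 1, 0] * X * diagonal α)ᵀ * X).map fun t => t ^ 2)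
      (W ⊙ (Xᵀ * X).map d2) = 2 * (α ⬝ᵥ lap (Qmat W X d2) *ᵥ α) := by
  rw [dotProduct_lap_mulVec_of_isSymm (isSymm_Qmat hW X d2), frob, ← mul_assoc,
    show (2 : ℝ) * (1 / 2) = 1 by norm_num, one_mul]
  refine Finset.sum_congr rfl fun i _ => Finset.sum_congr rfl fun j _ => ?_
  rw [map_apply, transpose_mul_add_transpose_mul_apply_of_skew _ _ _ rot_transpose, mul_pow,
    sq_rot_gram_apply hX, hadamard_apply, map_apply, Qmat, of_apply]
  ring

end Hessian

theorem hessian_structure_circle_general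
    {n : ℕ}
    (W : Matrix (Fin n) (Fin n) ℝ) (hWsymm : W.IsSymm)
    (d1 d2 : ℝ → ℝ)
    (X : Matrix (Fin 2) (Fin n) ℝ) (hX : unitCols X) :
    (∀ V : Matrix (Fin 2) (Fin n) ℝ, (∀ j, (Xᵀ * V) j j = 0) →
      ∃ α : Fin n → ℝ, V = !![(0 : ℝ), -1; 1, 0] * X * Matrix.diagonal α) ∧
    (∀ α : Fin n → ℝ,
      -(frob ((!![(0 : ℝ), -1; 1, 0] * X * Matrix.diagonal α)ᵀ *
            (!![(0 : ℝ), -1; 1, 0] * X * Matrix.diagonal α)) (Smat W X d1))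
        + (1 / 2) * frob
            ((Xᵀ * (!![(0 : ℝ), -1; 1, 0] * X * Matrix.diagonal α)
              + (!![(0 : ℝ), -1; 1, 0] * X * Matrix.diagonal α)ᵀ * X).map fun t => t ^ 2)
            (Matrix.hadamard W ((Xᵀ * X).map d2))
      = -(α ⬝ᵥ (lap (Mmat W X d1 d2)).mulVec α)) := by
  refine ⟨fun V hV => exists_eq_rot_mul_diagonal hX hV, fun α => ?_⟩
  rw [gram_mul_diagonal_of_orthogonal _ _ _ rot_transpose_mul_rot, Smat,
    frob_diagonal_mul_mul_diagonal_ddiag_sub α (gram_apply_self hX) (isSymm_Amat hWsymm X d1),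
    frob_sq_rot_tangent hWsymm hX, Mmat_eq_hadamard_sub_Qmat, lap_sub, sub_mulVec, dotProduct_sub]
  ring

/-- Lemma 1, `d = 2` Hessian structure: every tangent vector at `X` has the
form `Ẋ = J X diag(α)`, and on these the Hessian quadratic form equals `−αᵀ L(M) α` with
`m_ij = w_ij·h(x_iᵀx_j)`, `h(t) = tφ'(t) − (1−t²)φ''(t)`. -/
theorem hessian_structure_circle
    {n : ℕ} (hn : 1 ≤ n)
    (W : Matrix (Fin n) (Fin n) ℝ) (hWsymm : W.IsSymm) (hWnonneg : ∀ i j, 0 ≤ W i j)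
    (φ d1 d2 : ℝ → ℝ)
    (hder1 : ∀ t ∈ Set.Icc (-1 : ℝ) 1, HasDerivAt φ (d1 t) t)
    (hder2 : ∀ t ∈ Set.Icc (-1 : ℝ) 1, HasDerivAt d1 (d2 t) t)
    (hd2cont : ContinuousOn d2 (Set.Icc (-1 : ℝ) 1))
    (X : Matrix (Fin 2) (Fin n) ℝ) (hX : unitCols X) :
    (∀ V : Matrix (Fin 2) (Fin n) ℝ, (∀ j, (Xᵀ * V) j j = 0) →
      ∃ α : Fin n → ℝ, V = !![(0 : ℝ), -1; 1, 0] * X * Matrix.diagonal α) ∧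
    (∀ α : Fin n → ℝ,
      -(frob ((!![(0 : ℝ), -1; 1, 0] * X * Matrix.diagonal α)ᵀ *
            (!![(0 : ℝ), -1; 1, 0] * X * Matrix.diagonal α)) (Smat W X d1))
        + (1 / 2) * frob
            ((Xᵀ * (!![(0 : ℝ), -1; 1, 0] * X * Matrix.diagonal α)
              + (!![(0 : ℝ), -1; 1, 0] * X * Matrix.diagonal α)ᵀ * X).map fun t => t ^ 2)
            (Matrix.hadamard W ((Xᵀ * X).map d2))
      = -(α ⬝ᵥ (lap (Mmat W X d1 d2)).mulVec α)) :=
  hessian_structure_circle_general W hWsymm d1 d2 X hX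
end
end

section
/- Assume φ'(t) > 0 for all t ∈ [−1,1] and that the graph W is connected. Let X ∈ ℝ^{d×n} with unit-norm columns be critical for f with negative-semidefinite Hessian. If there exists a nonzero vector v ∈ ℝ^d with Xᵀv ≥ 0 entrywise (all points lie in a common closed hemisphere), then all columns of X are equal: x_1 = ⋯ = x_n. Moreover, such a vector v always exists whenever rank(X) < d. -/
open Matrix

noncomputable section

/-- Propagation along a walk in the support graph of `W`. -/
lemma propagate_walk {n d : ℕ} {W : Matrix (Fin n) (Fin n) ℝ} {X : Matrix (Fin d) (Fin n) ℝ}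
    (hWs : ∀ i j, W i j = W j i)
    (P : Fin n → Prop)
    (hstep : ∀ j, P j → ∀ m, 0 < W m j → (∀ k, X k m = X k j) ∧ P m)
    {a b : Fin n} (w : (SimpleGraph.fromRel fun i j => 0 < W i j).Walk a b)
    (ha : P a) : ∀ k, X k b = X k a := by
  induction w with
  | nil => intro k; rfl
  | @cons u c b hadj w ih =>
    have hW : 0 < W c u := by
      rcases hadj.2 with h | h
      · rw [hWs]; exact h
      · exact h
    obtain ⟨heq, hPc⟩ := hstep u ha c hW
    intro k
    rw [ih hPc k, heq k]

/-- Lemma 2, hemisphere: if a second-order critical point lies in a common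
closed hemisphere `Xᵀv ≥ 0` (`v ≠ 0`), then it is synchronized; such a `v` exists whenever
`rank(X) < d`. -/
theorem hemisphere_lemma
    {d n : ℕ} (hd : 2 ≤ d) (hn : 1 ≤ n)
    (W : Matrix (Fin n) (Fin n) ℝ) (hWsymm : W.IsSymm) (hWnonneg : ∀ i j, 0 ≤ W i j)
    (hconn : ConnectedW W)
    (φ d1 d2 : ℝ → ℝ)
    (hder1 : ∀ t ∈ Set.Icc (-1 : ℝ) 1, HasDerivAt φ (d1 t) t)
    (hder2 : ∀ t ∈ Set.Icc (-1 : ℝ) 1, HasDerivAt d1 (d2 t) t)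
    (hd2cont : ContinuousOn d2 (Set.Icc (-1 : ℝ) 1))
    (hd1pos : ∀ t ∈ Set.Icc (-1 : ℝ) 1, 0 < d1 t)
    (X : Matrix (Fin d) (Fin n) ℝ) (hX : unitCols X)
    (hcrit : IsCritical W X d1) (hhess : HessNegSemidef W X d1 d2) :
    (∀ v : Fin d → ℝ, v ≠ 0 → (∀ j, 0 ≤ Xᵀ.mulVec v j) →
      ∀ j j' : Fin n, ∀ i, X i j = X i j') ∧
    (X.rank < d → ∃ v : Fin d → ℝ, v ≠ 0 ∧ ∀ j, 0 ≤ Xᵀ.mulVec v j) := by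
  classical
  -- Notation and basic facts
  have hWs : ∀ i j, W i j = W j i := fun i j => by
    have := congrFun (congrFun hWsymm i) j
    simpa [Matrix.transpose_apply] using this.symm
  set g : Matrix (Fin n) (Fin n) ℝ := Xᵀ * X with hgdef
  have hgval : ∀ i j, g i j = ∑ k, X k i * X k j := fun i j => by
    simp [hgdef, Matrix.mul_apply, Matrix.transpose_apply]
  have hgsymm : ∀ i j, g i j = g j i := fun i j => by
    rw [hgval, hgval]; exact Finset.sum_congr rfl fun k _ => mul_comm _ _
  have hgdiag : ∀ j, g j j = 1 := fun j => by
    rw [hgval]; simpa [pow_two] using hX j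
  have hgle : ∀ i j, g i j ≤ 1 := by
    intro i j
    have hcs := Finset.sum_mul_sq_le_sq_mul_sq Finset.univ (fun k => X k i) (fun k => X k j)
    rw [hX i, hX j, one_mul] at hcs
    rw [hgval] at *
    nlinarith [hcs]
  have hgmem : ∀ i j, g i j ∈ Set.Icc (-1 : ℝ) 1 := by
    intro i j
    have hcs := Finset.sum_mul_sq_le_sq_mul_sq Finset.univ (fun k => X k i) (fun k => X k j)
    rw [hX i, hX j, one_mul] at hcs
    rw [hgval] at *
    constructor <;> nlinarith [hcs]
  set A : Matrix (Fin n) (Fin n) ℝ := Amat W X d1 with hAdef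
  have hAval : ∀ i j, A i j = W i j * d1 (g i j) := fun i j => rfl
  have hAnn : ∀ i j, 0 ≤ A i j := fun i j =>
    mul_nonneg (hWnonneg i j) (hd1pos _ (hgmem i j)).le
  have hAsymm : ∀ i j, A i j = A j i := fun i j => by
    rw [hAval, hAval, hWs i j, hgsymm i j]
  have hApos : ∀ i j, 0 < W i j → 0 < A i j := fun i j hw =>
    mul_pos hw (hd1pos _ (hgmem i j))
  -- if g i j = 1 then columns i and j are equal
  have hcols_eq : ∀ i j, g i j = 1 → ∀ k, X k i = X k j := by
    intro i j hg k
    have hssum : ∑ m, (X m i - X m j) ^ 2 = 0 := by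
      have e1 : ∑ m, (X m i - X m j) ^ 2
          = ∑ m, (X m i ^ 2 + X m j ^ 2 - 2 * (X m i * X m j)) :=
        Finset.sum_congr rfl fun m _ => by ring
      have e2 : ∑ m, (X m i ^ 2 + X m j ^ 2 - 2 * (X m i * X m j))
          = (∑ m, X m i ^ 2) + (∑ m, X m j ^ 2) - 2 * ∑ m, X m i * X m j := by
        rw [Finset.sum_sub_distrib, Finset.sum_add_distrib, Finset.mul_sum]
      rw [e1, e2, hX i, hX j, ← hgval, hg]; ring
    have := (Finset.sum_eq_zero_iff_of_nonneg (fun m _ => sq_nonneg (X m i - X m j))).1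
      hssum k (Finset.mem_univ k)
    have := sq_eq_zero_iff.1 this
    linarith
  -- Smat entries
  have hSval : ∀ m j, Smat W X d1 m j
      = (if m = j then ∑ p, g j p * A p j else 0) - A m j := by
    intro m j
    show (ddiag ((Xᵀ * X) * Amat W X d1) - Amat W X d1) m j = _
    rw [Matrix.sub_apply]
    congr 1
    show Matrix.diagonal (fun i => ((Xᵀ * X) * Amat W X d1) i i) m j = _
    rw [Matrix.diagonal_apply]
    by_cases h : m = j
    · subst h
      rw [if_pos rfl, if_pos rfl, Matrix.mul_apply]
    · rw [if_neg h, if_neg h]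
  -- criticality, scalar form
  have hcrit' : ∀ k j, ∑ m, X k m * Smat W X d1 m j = 0 := by
    intro k j
    have := congrFun (congrFun hcrit k) j
    simpa [Matrix.mul_apply] using this
  -- sigma
  set σ : Fin n → ℝ := fun j => ∑ m, A m j * (1 - g m j) with hσdef
  have hσnn : ∀ j, 0 ≤ σ j := fun j =>
    Finset.sum_nonneg fun m _ => mul_nonneg (hAnn m j) (by linarith [hgle m j])
  have hσzero_edge : ∀ j, σ j = 0 → ∀ m, 0 < W m j → ∀ k, X k m = X k j := by
    intro j hσ m hw k
    have hterm := (Finset.sum_eq_zero_iff_of_nonneg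
      (fun m _ => mul_nonneg (hAnn m j) (by linarith [hgle m j]))).1 hσ m (Finset.mem_univ m)
    have hA : 0 < A m j := hApos m j hw
    have hg1 : g m j = 1 := by
      rcases mul_eq_zero.1 hterm with h | h
      · exact absurd h (ne_of_gt hA)
      · linarith
    exact hcols_eq m j hg1 k
  -- sum of sigma in terms of S
  have hsumS : ∑ j, ∑ m, Smat W X d1 m j = -(∑ j, σ j) := by
    rw [hσdef, ← Finset.sum_neg_distrib]
    refine Finset.sum_congr rfl fun j _ => ?_
    simp only [hSval]
    rw [Finset.sum_sub_distrib, Finset.sum_ite_eq' Finset.univ j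
      (fun _ => ∑ p, g j p * A p j)]
    simp only [Finset.mem_univ, if_true]
    rw [← Finset.sum_neg_distrib]
    have : ∑ m, -(A m j * (1 - g m j)) = ∑ m, (A m j * g m j - A m j) := by
      refine Finset.sum_congr rfl fun m _ => by ring
    rw [this, Finset.sum_sub_distrib]
    have : ∑ p, g j p * A p j = ∑ m, A m j * g m j := by
      refine Finset.sum_congr rfl fun p _ => by rw [hgsymm j p]; ring
    rw [this]
  constructor
  · -- Part 1
    intro v hv hvpos j j' i
    set c : Fin n → ℝ := fun j => ∑ k, X k j * v k with hcdef
    have hceq : ∀ m, c m = ∑ k, X k m * v k := fun _ => rfl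
    have hcval : ∀ j, Xᵀ.mulVec v j = c j := fun j => by
      simp [Matrix.mulVec, dotProduct, Matrix.transpose_apply, hceq]
    have hcnn : ∀ j, 0 ≤ c j := fun j => by rw [← hcval]; exact hvpos j
    -- c^T S = 0
    have hcS : ∀ j, ∑ m, c m * Smat W X d1 m j = 0 := by
      intro j
      calc ∑ m, c m * Smat W X d1 m j
          = ∑ m, ∑ k, v k * (X k m * Smat W X d1 m j) := by
            refine Finset.sum_congr rfl fun m _ => ?_
            rw [hceq, Finset.sum_mul]
            exact Finset.sum_congr rfl fun k _ => by ring
        _ = ∑ k, ∑ m, v k * (X k m * Smat W X d1 m j) := Finset.sum_comm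
        _ = 0 := by
            refine Finset.sum_eq_zero fun k _ => ?_
            rw [← Finset.mul_sum, hcrit' k j, mul_zero]
    -- c j * σ j = c j * ∑ A m j - ∑ c m A m j
    have hkey : ∀ j, c j * σ j = c j * (∑ m, A m j) - ∑ m, c m * A m j := by
      intro j
      have h1 := hcS j
      simp only [hSval] at h1
      have h2 : ∑ m, c m * ((if m = j then ∑ p, g j p * A p j else 0) - A m j)
          = c j * (∑ p, g j p * A p j) - ∑ m, c m * A m j := by
        have : ∀ m, c m * ((if m = j then ∑ p, g j p * A p j else 0) - A m j)
            = (if m = j then c j * ∑ p, g j p * A p j else 0) - c m * A m j := by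
          intro m; by_cases h : m = j <;> simp [h] <;> ring
        rw [Finset.sum_congr rfl fun m _ => this m, Finset.sum_sub_distrib,
          Finset.sum_ite_eq' Finset.univ j (fun _ => c j * ∑ p, g j p * A p j)]
        simp
      rw [h2] at h1
      have h3 : c j * (∑ p, g j p * A p j) = ∑ m, c m * A m j := by linarith
      have hσeq : σ j = ∑ m, A m j * (1 - g m j) := rfl
      rw [hσeq]
      simp only [Finset.mul_sum]
      have : ∑ m, c j * (A m j * (1 - g m j))
          = (∑ m, c j * A m j) - ∑ p, c j * (g j p * A p j) := by
        rw [← Finset.sum_sub_distrib]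
        refine Finset.sum_congr rfl fun m _ => by rw [hgsymm j m]; ring
      rw [this, ← Finset.mul_sum, ← Finset.mul_sum, h3, Finset.mul_sum]
    -- sum over j is zero by symmetry
    have hsum0 : ∑ j, c j * σ j = 0 := by
      have : ∑ j, c j * σ j
          = (∑ j, ∑ m, A m j * c j) - ∑ j, ∑ m, A m j * c m := by
        rw [← Finset.sum_sub_distrib]
        refine Finset.sum_congr rfl fun j _ => ?_
        rw [hkey j, Finset.mul_sum]
        congr 1
        · exact Finset.sum_congr rfl fun m _ => by ring
        · exact Finset.sum_congr rfl fun m _ => by ring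
      rw [this]
      have hswap : ∑ j, ∑ m, A m j * c j = ∑ j, ∑ m, A m j * c m := by
        rw [Finset.sum_comm]
        refine Finset.sum_congr rfl fun j _ => Finset.sum_congr rfl fun m _ => by
          rw [hAsymm j m]
      rw [hswap]; ring
    have hcs0 : ∀ j, c j * σ j = 0 := by
      intro j
      exact (Finset.sum_eq_zero_iff_of_nonneg
        (fun j _ => mul_nonneg (hcnn j) (hσnn j))).1 hsum0 j (Finset.mem_univ j)
    -- step property for positive c
    have hstepP : ∀ j, 0 < c j → ∀ m, 0 < W m j → (∀ k, X k m = X k j) ∧ 0 < c m := by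
      intro j hc m hw
      have hσ0 : σ j = 0 := by
        rcases mul_eq_zero.1 (hcs0 j) with h | h
        · exact absurd h (ne_of_gt hc)
        · exact h
      have heq := hσzero_edge j hσ0 m hw
      refine ⟨heq, ?_⟩
      have : c m = c j := by
        rw [hceq, hceq]
        exact Finset.sum_congr rfl fun k _ => by rw [heq k]
      rw [this]; exact hc
    by_cases hP : ∃ j₀, 0 < c j₀
    · obtain ⟨j₀, hj₀⟩ := hP
      have hreach : ∀ b : Fin n, ∀ k, X k b = X k j₀ := by
        intro b
        obtain ⟨w⟩ := hconn.preconnected j₀ b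
        exact propagate_walk hWs (fun j => 0 < c j) hstepP w hj₀
      rw [hreach j i, hreach j' i]
    · -- all c j = 0 : use Hessian with V = v ⬝ 1ᵀ
      push_neg at hP
      have hc0 : ∀ j, c j = 0 := fun j => le_antisymm (hP j) (hcnn j)
      set V : Matrix (Fin d) (Fin n) ℝ := Matrix.of fun i _ => v i with hVdef
      have hXtV : ∀ p q, (Xᵀ * V) p q = c p := by
        intro p q
        simp [Matrix.mul_apply, Matrix.transpose_apply, hVdef, hceq]
      have htang : ∀ j, (Xᵀ * V) j j = 0 := fun j => by rw [hXtV, hc0]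
      have hhe := hhess V htang
      have hVtX : ∀ p q, (Vᵀ * X) p q = c q := by
        intro p q
        simp only [Matrix.mul_apply, Matrix.transpose_apply, hVdef, Matrix.of_apply]
        rw [hceq]
        exact Finset.sum_congr rfl fun k _ => mul_comm _ _
      have hterm2 : frob ((Xᵀ * V + Vᵀ * X).map fun t => t ^ 2)
          (Matrix.hadamard W ((Xᵀ * X).map d2)) = 0 := by
        refine Finset.sum_eq_zero fun p _ => Finset.sum_eq_zero fun q _ => ?_
        simp [Matrix.map_apply, Matrix.add_apply, hXtV, hVtX, hc0]
      have hVtV : ∀ p q, (Vᵀ * V) p q = ∑ k, v k ^ 2 := by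
        intro p q
        simp [Matrix.mul_apply, Matrix.transpose_apply, hVdef, pow_two]
      have hfrob1 : frob (Vᵀ * V) (Smat W X d1)
          = (∑ k, v k ^ 2) * ∑ p, ∑ q, Smat W X d1 p q := by
        rw [Finset.mul_sum]
        refine Finset.sum_congr rfl fun p _ => ?_
        rw [Finset.mul_sum]
        exact Finset.sum_congr rfl fun q _ => by rw [hVtV]
      rw [hterm2, hfrob1] at hhe
      have hvsq : 0 < ∑ k, v k ^ 2 := by
        rcases Function.ne_iff.1 hv with ⟨k, hk⟩
        have hk' : v k ≠ 0 := hk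
        have : (0:ℝ) < v k ^ 2 :=
          lt_of_le_of_ne (sq_nonneg _) (Ne.symm (pow_ne_zero 2 hk'))
        exact Finset.sum_pos' (fun m _ => sq_nonneg _) ⟨k, Finset.mem_univ k, this⟩
      have hsum_nonneg : 0 ≤ ∑ p, ∑ q, Smat W X d1 p q := by
        by_contra hneg
        push_neg at hneg
        nlinarith
      have hSsum : ∑ p, ∑ q, Smat W X d1 p q = -(∑ j, σ j) := by
        rw [← hsumS, Finset.sum_comm]
      have hσsum0 : ∑ j, σ j = 0 := by
        have h1 : 0 ≤ ∑ j, σ j := Finset.sum_nonneg fun j _ => hσnn j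
        rw [hSsum] at hsum_nonneg
        linarith
      have hσ0 : ∀ j, σ j = 0 := fun j =>
        (Finset.sum_eq_zero_iff_of_nonneg (fun j _ => hσnn j)).1 hσsum0 j (Finset.mem_univ j)
      have hstepT : ∀ j : Fin n, True → ∀ m, 0 < W m j → (∀ k, X k m = X k j) ∧ True := by
        intro j _ m hw
        exact ⟨hσzero_edge j (hσ0 j) m hw, trivial⟩
      obtain ⟨w⟩ := hconn.preconnected j' j
      exact propagate_walk hWs (fun _ => True) hstepT w trivial i
  · -- Part 2 : existence of v when rank X < d
    intro hrank
    have hrt : Xᵀ.rank = X.rank := Matrix.rank_transpose X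
    have hrn : Xᵀ.rank + Module.finrank ℝ (LinearMap.ker Xᵀ.mulVecLin) = d := by
      have h := LinearMap.finrank_range_add_finrank_ker (Xᵀ.mulVecLin)
      simpa [Matrix.rank, Module.finrank_pi] using h
    have hker : 0 < Module.finrank ℝ (LinearMap.ker Xᵀ.mulVecLin) := by
      rw [hrt] at hrn
      omega
    have : Nontrivial (LinearMap.ker Xᵀ.mulVecLin) := Module.nontrivial_of_finrank_pos hker
    obtain ⟨⟨v, hvker⟩, hvne⟩ := exists_ne (0 : LinearMap.ker Xᵀ.mulVecLin)
    refine ⟨v, ?_, ?_⟩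
    · intro h
      apply hvne
      ext
      simp [h]
    · intro j
      have : Xᵀ.mulVec v = 0 := hvker
      rw [this]
      exact le_refl 0
end
end
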